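/- arXiv:1501.01505 — 8 statements merged into one kernel-verified Lean document; each statement's English description precedes it below -/
import Mathlib

section
/- Let 0 < p_1 < p_2 < ... < p_n and let r = 2k be an even integer with 1 ≤ r ≤ n. Then the inertia of the Loewner matrix L_r is (k, n-r, k), i.e., L_r has exactly k positive eigenvalues, n-r zero eigenvalues, and k negative eigenvalues (counted with multiplicity). -/
open Matrix

/-- The Loewner matrix `L_r` associated with points `p 0, ..., p (n-1)` and exponent `r`:
its `(i,j)` entry is `(p i ^ r - p j ^ r) / (p i - p j)` for `i ≠ j` and `r * p i ^ (r-1)`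
for `i = j` (powers are real powers `Real.rpow`). -/
noncomputable def loewner {n : ℕ} (p : Fin n → ℝ) (r : ℝ) : Matrix (Fin n) (Fin n) ℝ :=
  Matrix.of fun i j => if i = j then r * p i ^ (r - 1) else (p i ^ r - p j ^ r) / (p i - p j)

/-!
Write `V` for the `n × r` matrix with rows `(1, p i, …, p i ^ (r - 1))` and `J` for the
`r × r` exchange matrix. The geometric-sum identity
`(x ^ r - y ^ r) / (x - y) = ∑ m < r, x ^ m y ^ (r - 1 - m)` gives `L_r = V J Vᵀ`, so
`rank L_r ≤ r`. Since the `p i` are distinct and `r ≤ n`, `Vᵀ` has a right inverse, so every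
congruence `Wᵀ J W` is also of the form `Mᵀ L_r M`. For `r = 2k` the columns `e_s ± e_(r-1-s)`,
`s < k`, make `Wᵀ J W = ±2`, so `L_r` has at least `k` positive and `k` negative eigenvalues.
As these number at most `rank L_r ≤ 2k`, both counts are exactly `k`, and the other `n - r`
eigenvalues vanish.
-/

namespace Matrix

variable {R : Type*} [NonAssocSemiring R]

theorem mul_one_submatrix_id {l m n : Type*} [Fintype n] [DecidableEq n] (M : Matrix m n R)
    (e : l → n) : M * (1 : Matrix n n R).submatrix id e = M.submatrix id e := by
  simpa using mul_submatrix_one (Equiv.refl n) e M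

theorem transpose_one_submatrix_mul_mul {l n : Type*} [Fintype n] [DecidableEq n]
    (B : Matrix n n R) (e : l → n) :
    ((1 : Matrix n n R).submatrix id e)ᵀ * B * (1 : Matrix n n R).submatrix id e =
      B.submatrix e e := by
  have hleft : ((1 : Matrix n n R).submatrix id e)ᵀ * B = B.submatrix e id := by
    simpa [transpose_submatrix] using one_submatrix_mul e (Equiv.refl n) B
  rw [hleft, mul_one_submatrix_id, submatrix_submatrix]
  rfl

def exchange (R : Type*) [NonAssocSemiring R] (r : ℕ) : Matrix (Fin r) (Fin r) R :=
  (1 : Matrix (Fin r) (Fin r) R).submatrix id Fin.rev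

theorem mul_exchange {m : Type*} {r : ℕ} (M : Matrix m (Fin r) R) :
    M * exchange R r = M.submatrix id Fin.rev :=
  mul_one_submatrix_id M Fin.rev

theorem transpose_exchange (r : ℕ) : (exchange R r)ᵀ = exchange R r := by
  ext i j
  simp only [exchange, transpose_apply, submatrix_apply, id_eq, one_apply]
  exact if_congr (by rw [eq_comm, Fin.rev_eq_iff]) rfl rfl

theorem exchange_mul_exchange (r : ℕ) : exchange R r * exchange R r = 1 := by
  rw [mul_exchange]
  simp [exchange, Fin.rev_involutive.comp_self]

theorem exists_transpose_mul_exchange_mul_eq_smul_one {R : Type*} [CommRing R] {k r : ℕ}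
    (hk : 2 * k ≤ r) (c : R) :
    ∃ W : Matrix (Fin r) (Fin k) R, Wᵀ * exchange R r * W = (2 * c) • 1 := by
  set J := exchange R r
  set S : Matrix (Fin r) (Fin k) R := (1 : Matrix (Fin r) (Fin r) R).submatrix id
    (Fin.castLE (by omega))
  have hS : Sᵀ * S = 1 := by
    rw [← Matrix.mul_one Sᵀ, transpose_one_submatrix_mul_mul]
    exact submatrix_one _ (Fin.castLE_injective _)
  have hJS : Sᵀ * J * S = 0 := by
    rw [transpose_one_submatrix_mul_mul]
    ext s t
    simp only [J, exchange, submatrix_apply, id_eq, one_apply, zero_apply, ite_eq_right_iff]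
    intro h
    have := congrArg Fin.val h
    simp only [Fin.val_castLE, Fin.val_rev] at this
    omega
  -- the columns of `S + c • (J * S)` are `e_s + c • e_(r-1-s)`
  refine ⟨S + c • (J * S), ?_⟩
  have hJ : Jᵀ = J := transpose_exchange r
  have hJJ : J * J = 1 := exchange_mul_exchange r
  have hSJS : Sᵀ * (J * S) = 0 := by rw [← Matrix.mul_assoc, hJS]
  have hJJS : J * (J * S) = S := by rw [← Matrix.mul_assoc, hJJ, Matrix.one_mul]
  simp only [transpose_add, transpose_smul, transpose_mul, hJ, Matrix.add_mul, Matrix.mul_add,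
    Matrix.smul_mul, Matrix.mul_smul, Matrix.mul_assoc, hJJS, hSJS, hS]
  module

theorem exists_rectVandermonde_transpose_mul_eq_one {K : Type*} [Field K] {n r : ℕ}
    {p : Fin n → K} (hp : Function.Injective p) (hrn : r ≤ n) :
    ∃ B : Matrix (Fin n) (Fin r) K, (rectVandermonde p 1 r)ᵀ * B = 1 := by
  set e := Fin.castLE hrn
  have hV : (rectVandermonde p 1 r)ᵀ * (1 : Matrix (Fin n) (Fin n) K).submatrix id e =
      (vandermonde (p ∘ e))ᵀ := by
    rw [mul_one_submatrix_id]
    ext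
    simp [rectVandermonde_apply]
  have hdet : IsUnit (vandermonde (p ∘ e))ᵀ.det := by
    rw [det_transpose, isUnit_iff_ne_zero, det_vandermonde_ne_zero_iff]
    exact hp.comp (Fin.castLE_injective hrn)
  refine ⟨(1 : Matrix (Fin n) (Fin n) K).submatrix id e * (vandermonde (p ∘ e))ᵀ⁻¹, ?_⟩
  rw [← Matrix.mul_assoc, hV, mul_nonsing_inv _ hdet]

section Inertia

open scoped ComplexOrder

variable {m n 𝕜 : Type*} [Fintype n] [DecidableEq n] [RCLike 𝕜]

theorem card_le_card_pos_of_posDef_conjTranspose_mul_diagonal_mul [Fintype m] (e : n → ℝ)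
    (N : Matrix n m 𝕜) (h : (Nᴴ * diagonal (fun i => (e i : 𝕜)) * N).PosDef) :
    Fintype.card m ≤ Fintype.card {i // 0 < e i} := by
  let B : Matrix {i // 0 < e i} m 𝕜 := N.submatrix Subtype.val id
  have hB : Function.Injective B.mulVecLin := by
    rw [← LinearMap.ker_eq_bot, LinearMap.ker_eq_bot']
    intro c hc
    by_contra hc0
    have hform : star c ⬝ᵥ (Nᴴ * diagonal (fun i => (e i : 𝕜)) * N) *ᵥ c =
        ((∑ i, e i * ‖(N *ᵥ c) i‖ ^ 2 : ℝ) : 𝕜) := by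
      rw [Matrix.mul_assoc, ← mulVec_mulVec, dotProduct_mulVec, ← star_mulVec,
        ← mulVec_mulVec]
      simp only [dotProduct, mulVec_diagonal, Pi.star_apply, RCLike.star_def]
      push_cast
      refine Finset.sum_congr rfl fun i _ => ?_
      rw [mul_left_comm, RCLike.conj_mul]
    have hnonpos : ∑ i, e i * ‖(N *ᵥ c) i‖ ^ 2 ≤ 0 := by
      refine Finset.sum_nonpos fun i _ => ?_
      by_cases hi : 0 < e i
      · have : (N *ᵥ c) i = 0 := congrFun hc ⟨i, hi⟩
        simp [this]
      · exact mul_nonpos_of_nonpos_of_nonneg (not_lt.mp hi) (sq_nonneg _)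
    have hpos := h.dotProduct_mulVec_pos hc0
    rw [hform, RCLike.ofReal_pos] at hpos
    exact hpos.not_ge hnonpos
  simpa using LinearMap.finrank_le_finrank_of_injective hB

namespace IsHermitian

variable {A : Matrix n n 𝕜} (hA : A.IsHermitian)
include hA

theorem conjTranspose_mul_mul_eq (M : Matrix n m 𝕜) :
    Mᴴ * A * M = ((hA.eigenvectorUnitary : Matrix n n 𝕜)ᴴ * M)ᴴ *
      diagonal (fun i => (hA.eigenvalues i : 𝕜)) *
        ((hA.eigenvectorUnitary : Matrix n n 𝕜)ᴴ * M) := by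
  conv_lhs => rw [hA.spectral_theorem, Unitary.conjStarAlgAut_apply]
  simp only [conjTranspose_mul, conjTranspose_conjTranspose, Matrix.mul_assoc,
    star_eq_conjTranspose]
  rfl

theorem card_le_card_eigenvalues_pos [Fintype m] (M : Matrix n m 𝕜)
    (hM : (Mᴴ * A * M).PosDef) : Fintype.card m ≤ Fintype.card {i // 0 < hA.eigenvalues i} :=
  card_le_card_pos_of_posDef_conjTranspose_mul_diagonal_mul _ _
    (hA.conjTranspose_mul_mul_eq M ▸ hM)

theorem card_le_card_eigenvalues_neg [Fintype m] (M : Matrix n m 𝕜)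
    (hM : (-(Mᴴ * A * M)).PosDef) : Fintype.card m ≤ Fintype.card {i // hA.eigenvalues i < 0} := by
  rw [hA.conjTranspose_mul_mul_eq, ← Matrix.neg_mul, ← Matrix.mul_neg, diagonal_neg] at hM
  have h := card_le_card_pos_of_posDef_conjTranspose_mul_diagonal_mul
    (fun i => -hA.eigenvalues i) _ (by simpa only [RCLike.ofReal_neg] using hM)
  simpa only [neg_pos] using h

theorem card_eigenvalues_pos_add_card_eigenvalues_neg :
    Fintype.card {i // 0 < hA.eigenvalues i} + Fintype.card {i // hA.eigenvalues i < 0} =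
      A.rank := by
  rw [hA.rank_eq_card_non_zero_eigs, add_comm, ← Fintype.card_subtype_or_disjoint]
  · exact Fintype.card_congr (Equiv.subtypeEquivRight fun i => ne_iff_lt_or_gt.symm)
  · exact disjoint_iff_inf_le.mpr fun i h => (h.1.trans h.2).false

theorem card_eigenvalues_eq_zero_add_rank :
    Fintype.card {i // hA.eigenvalues i = 0} + A.rank = Fintype.card n := by
  rw [hA.rank_eq_card_non_zero_eigs, Fintype.card_subtype_compl]
  exact Nat.add_sub_cancel' (Fintype.card_subtype_le _)

end IsHermitian

end Inertia

end Matrix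

open Finset in
theorem loewner_natCast_apply {n : ℕ} {p : Fin n → ℝ} (hp : Function.Injective p) (r : ℕ)
    (i j : Fin n) : loewner p r i j = ∑ m ∈ range r, p i ^ m * p j ^ (r - 1 - m) := by
  by_cases hij : i = j
  · subst hij
    rw [geom_sum₂_self, loewner, of_apply, if_pos rfl]
    rcases Nat.eq_zero_or_pos r with rfl | hr
    · simp
    · rw [← Nat.cast_one, ← Nat.cast_sub hr, Real.rpow_natCast]
  · rw [loewner, of_apply, if_neg hij, Real.rpow_natCast, Real.rpow_natCast,
      div_eq_iff (sub_ne_zero.mpr (hp.ne hij)), geom_sum₂_mul]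

theorem loewner_natCast_eq {n : ℕ} {p : Fin n → ℝ} (hp : Function.Injective p) (r : ℕ) :
    loewner p r = rectVandermonde p 1 r * exchange ℝ r * (rectVandermonde p 1 r)ᵀ := by
  ext i j
  rw [loewner_natCast_apply hp, geom_sum₂_comm, ← Fin.sum_univ_eq_sum_range, mul_exchange,
    mul_apply]
  refine Finset.sum_congr rfl fun m _ => ?_
  simp only [submatrix_apply, id_eq, transpose_apply, rectVandermonde_apply, Pi.one_apply,
    one_pow, mul_one, one_mul, Fin.val_rev, mul_comm (p j ^ (m : ℕ))]
  congr 2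
  omega

theorem rank_loewner_natCast_le {n : ℕ} {p : Fin n → ℝ} (hp : Function.Injective p) (r : ℕ) :
    (loewner p r).rank ≤ r := by
  rw [loewner_natCast_eq hp]
  calc _ ≤ (rectVandermonde p 1 r * exchange ℝ r).rank := rank_mul_le_left _ _
    _ ≤ Fintype.card (Fin r) := rank_le_card_width _
    _ = r := Fintype.card_fin r

theorem exists_transpose_mul_loewner_mul_eq_smul_one {n k r : ℕ} {p : Fin n → ℝ}
    (hp : Function.Injective p) (hrn : r ≤ n) (hk : 2 * k ≤ r) (c : ℝ) :
    ∃ M : Matrix (Fin n) (Fin k) ℝ, Mᵀ * loewner p r * M = (2 * c) • 1 := by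
  obtain ⟨B, hB⟩ := exists_rectVandermonde_transpose_mul_eq_one hp hrn
  obtain ⟨W, hW⟩ := exists_transpose_mul_exchange_mul_eq_smul_one (R := ℝ) hk c
  set V := rectVandermonde p 1 r
  have hB' : Bᵀ * V = 1 := by simpa using congrArg transpose hB
  refine ⟨B * W, ?_⟩
  calc (B * W)ᵀ * loewner p r * (B * W)
      = Wᵀ * (Bᵀ * V) * exchange ℝ r * (Vᵀ * B * W) := by
        simp only [loewner_natCast_eq hp, transpose_mul, Matrix.mul_assoc, V]
    _ = (2 * c) • 1 := by rw [hB', hB, Matrix.mul_one, Matrix.one_mul, hW]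

theorem loewner_inertia_even_general {n k r : ℕ} (p : Fin n → ℝ)
    (hmono : StrictMono p)
    (hr : r = 2 * k) (hrn : r ≤ n)
    (hA : (loewner p (r : ℝ)).IsHermitian) :
    Fintype.card {i // 0 < hA.eigenvalues i} = k ∧
    Fintype.card {i // hA.eigenvalues i = 0} = n - r ∧
    Fintype.card {i // hA.eigenvalues i < 0} = k := by
  have hp := hmono.injective
  obtain ⟨Mpos, hMpos⟩ := exists_transpose_mul_loewner_mul_eq_smul_one hp hrn hr.ge (1 / 2)
  obtain ⟨Mneg, hMneg⟩ := exists_transpose_mul_loewner_mul_eq_smul_one hp hrn hr.ge (-1 / 2)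
  have hpos := hA.card_le_card_eigenvalues_pos Mpos
    (by norm_num [conjTranspose_eq_transpose_of_trivial, hMpos, PosDef.one])
  have hneg := hA.card_le_card_eigenvalues_neg Mneg
    (by norm_num [conjTranspose_eq_transpose_of_trivial, hMneg, PosDef.one])
  have hrank := rank_loewner_natCast_le hp r
  have hnonzero := hA.card_eigenvalues_pos_add_card_eigenvalues_neg
  have hzero := hA.card_eigenvalues_eq_zero_add_rank
  simp only [Fintype.card_fin] at hpos hneg hzero
  omega

/-- If `r = 2k` is an even integer with `1 ≤ r ≤ n`, then the inertia of `L_r`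
is `(k, n - r, k)`. -/
theorem loewner_inertia_even {n k r : ℕ} (p : Fin n → ℝ)
    (hp : ∀ i, 0 < p i) (hmono : StrictMono p)
    (hr : r = 2 * k) (hr1 : 1 ≤ r) (hrn : r ≤ n)
    (hA : (loewner p (r : ℝ)).IsHermitian) :
    Fintype.card {i // 0 < hA.eigenvalues i} = k ∧
    Fintype.card {i // hA.eigenvalues i = 0} = n - r ∧
    Fintype.card {i // hA.eigenvalues i < 0} = k :=
  loewner_inertia_even_general p hmono hr hrn hA
end

section
/- Let r > 1 be a real number. Then for every n ≥ 2 and for every choice of real numbers 0 < p_1 < p_2 < ... < p_n, the Loewner matrix L_r has at least one negative eigenvalue. -/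
/-!
A positive semidefinite matrix has nonnegative `2 × 2` principal minors, but the minor of `L_r`
on two points `0 < a < b` is negative: the slope `(b ^ r - a ^ r) / (b - a)` exceeds the geometric
mean `r (a b) ^ ((r - 1) / 2)` of the derivatives at `a` and `b`. Writing `a = exp (m - d)`,
`b = exp (m + d)`, this is the inequality `r sinh d < sinh (r d)` for `d > 0`, which holds because
the derivative of `sinh (r u) - r sinh u` is `r (cosh (r u) - cosh u) > 0`.
-/

open Matrix

namespace Real

theorem mul_sinh_lt_sinh_mul {r d : ℝ} (hr : 1 < r) (hd : 0 < d) : r * sinh d < sinh (r * d) := by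
  have hmono : StrictMonoOn (fun u => sinh (r * u) - r * sinh u) (Set.Ici 0) := by
    refine strictMonoOn_of_deriv_pos (convex_Ici 0) (by fun_prop) fun u hu => ?_
    rw [interior_Ici, Set.mem_Ioi] at hu
    have hderiv : HasDerivAt (fun u => sinh (r * u) - r * sinh u)
        (cosh (r * u) * (r * 1) - r * cosh u) u :=
      ((hasDerivAt_id u).const_mul r).sinh.sub ((hasDerivAt_sinh u).const_mul r)
    have hcosh : cosh u < cosh (r * u) := by
      rw [cosh_lt_cosh, abs_of_pos hu, abs_of_pos (by positivity)]
      nlinarith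
    rw [hderiv.deriv]
    nlinarith
  simpa using hmono Set.self_mem_Ici hd.le hd

theorem exp_add_sub_exp_sub (m d : ℝ) : exp (m + d) - exp (m - d) = 2 * exp m * sinh d := by
  rw [sinh_eq, exp_add, exp_sub, exp_neg]
  ring

theorem mul_exp_lt_slope_rpow {r d : ℝ} (hr : 1 < r) (hd : 0 < d) (m : ℝ) :
    r * exp ((r - 1) * m) <
      (exp (m + d) ^ r - exp (m - d) ^ r) / (exp (m + d) - exp (m - d)) := by
  rw [← exp_mul, ← exp_mul, show (m + d) * r = r * m + r * d by ring,
    show (m - d) * r = r * m - r * d by ring, exp_add_sub_exp_sub, exp_add_sub_exp_sub,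
    lt_div_iff₀ (by have := sinh_pos_iff.2 hd; positivity)]
  have hexp : exp ((r - 1) * m) * exp m = exp (r * m) := by rw [← exp_add]; ring_nf
  calc r * exp ((r - 1) * m) * (2 * exp m * sinh d)
      = 2 * exp (r * m) * (r * sinh d) := by rw [← hexp]; ring
    _ < 2 * exp (r * m) * sinh (r * d) := by gcongr; exact mul_sinh_lt_sinh_mul hr hd

end Real

open Real

theorem mul_rpow_sub_one_lt_sq_slope {r a b : ℝ} (hr : 1 < r) (ha : 0 < a) (hab : a < b) :
    r * a ^ (r - 1) * (r * b ^ (r - 1)) < ((b ^ r - a ^ r) / (b - a)) ^ 2 := by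
  obtain ⟨m, d, hd, rfl, rfl⟩ : ∃ m d, 0 < d ∧ a = exp (m - d) ∧ b = exp (m + d) := by
    refine ⟨(log a + log b) / 2, (log b - log a) / 2, by linarith [log_lt_log ha hab], ?_, ?_⟩
    · rw [show (log a + log b) / 2 - (log b - log a) / 2 = log a by ring, exp_log ha]
    · rw [show (log a + log b) / 2 + (log b - log a) / 2 = log b by ring, exp_log (ha.trans hab)]
  have hgeom : r * exp (m - d) ^ (r - 1) * (r * exp (m + d) ^ (r - 1)) =
      (r * exp ((r - 1) * m)) ^ 2 := by
    rw [← exp_mul, ← exp_mul, mul_pow, ← exp_nat_mul, mul_mul_mul_comm, ← exp_add]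
    ring_nf
  rw [hgeom]
  exact pow_lt_pow_left₀ (mul_exp_lt_slope_rpow hr hd m) (by positivity) two_ne_zero

theorem det_loewner_submatrix_pair {n : ℕ} (p : Fin n → ℝ) (r : ℝ) {i j : Fin n} (hij : i ≠ j) :
    ((loewner p r).submatrix ![i, j] ![i, j]).det =
      r * p i ^ (r - 1) * (r * p j ^ (r - 1)) - ((p j ^ r - p i ^ r) / (p j - p i)) ^ 2 := by
  have hslope : (p i ^ r - p j ^ r) / (p i - p j) = (p j ^ r - p i ^ r) / (p j - p i) := by
    rw [← neg_sub, ← neg_sub (p j), neg_div_neg_eq]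
  rw [det_fin_two]
  simp [loewner, hij, hij.symm, hslope, sq]

theorem loewner_not_posSemidef {n : ℕ} {p : Fin n → ℝ} {r : ℝ} (hr : 1 < r) {i j : Fin n}
    (hpi : 0 < p i) (hij : p i < p j) : ¬ (loewner p r).PosSemidef := fun hpsd => by
  have hdet := (hpsd.submatrix ![i, j]).det_nonneg
  rw [det_loewner_submatrix_pair p r (fun h => hij.ne (congrArg p h))] at hdet
  linarith [mul_rpow_sub_one_lt_sq_slope hr hpi hij]

/-- For every real `r > 1`, every `n ≥ 2` and every choice `0 < p 0 < ⋯ < p (n-1)`,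
the Loewner matrix `L_r` has at least one negative eigenvalue. -/
theorem loewner_exists_negative_eigenvalue (r : ℝ) (hr : 1 < r) :
    ∀ (n : ℕ), 2 ≤ n → ∀ (p : Fin n → ℝ), (∀ i, 0 < p i) → StrictMono p →
    ∀ (hA : (loewner p r).IsHermitian), ∃ i, hA.eigenvalues i < 0 := by
  intro n hn p hp hmono hA
  by_contra! hnonneg
  have hp01 : p ⟨0, by omega⟩ < p ⟨1, by omega⟩ := hmono (Fin.mk_lt_mk.2 zero_lt_one)
  exact loewner_not_posSemidef hr (hp _) hp01 (hA.posSemidef_iff_eigenvalues_nonneg.2 hnonneg)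
end

section
/- Let 0 < p_1 < p_2 < ... < p_n, let c_1, ..., c_n be real numbers not all zero, and let r be a positive real number different from 1, 2, ..., n-1. Then the function f on (0,∞) defined by f(x) = Σ_{j=1}^n c_j (x^r - p_j^r)/(x - p_j) (with the quotient interpreted as the limiting value r·p_j^{r-1} at x = p_j) has at most n-1 zeros in (0,∞). -/
/-!
Multiplying `f` by `∏ j, (x - p j)` gives `g x = x ^ r * Q x - P x` with polynomials `Q ≠ 0` and
`P` of degree at most `n - 1`. If `f` had `n` positive zeros, `g` would vanish there and at the
`n` nodes `p j`, doubly at a node where `f` vanishes, so by Rolle's theorem `g'` would have at least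
`2n - 1` positive zeros. Differentiating `n - 1` more times kills `P` and leaves
`x ^ (r - n) * Qₙ x`, where `Qₙ` multiplies the `i`-th coefficient of `Q` by
`(r + i) (r + i - 1) ⋯ (r + i - n + 1)`. These factors are nonzero because `r ∉ {1, …, n - 1}`, so
`Qₙ` is a nonzero polynomial of degree at most `n - 1` with at least `n` positive roots.
-/

open Matrix

open Polynomial Finset Filter Topology Lagrange

theorem Set.encard_le_of_forall_finset_subset {α : Type*} {s : Set α} {k : ℕ∞}
    (h : ∀ t : Finset α, ↑t ⊆ s → (t.card : ℕ∞) ≤ k) : s.encard ≤ k := by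
  by_contra! hlt
  lift k to ℕ using hlt.ne_top
  obtain ⟨t, hts, ht⟩ := Set.exists_subset_encard_eq (Order.add_one_le_of_lt hlt)
  have hfin : t.Finite := Set.finite_of_encard_eq_coe ht
  have := h hfin.toFinset (by simpa using hts)
  rw [← hfin.encard_eq_coe_toFinset_card, ht] at this
  norm_cast at this
  omega

section Rolle

variable {U : Set ℝ} {h h' : ℝ → ℝ}

theorem card_le_encard_zeros_deriv_sdiff_add_one (hU : U.OrdConnected)
    (hd : ∀ x ∈ U, HasDerivAt h (h' x) x) {s : Finset ℝ} (hs : ∀ x ∈ s, x ∈ U ∧ h x = 0) :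
    (s.card : ℕ∞) ≤ ({x ∈ U | h' x = 0} \ ↑s).encard + 1 := by
  rcases ({x ∈ U | h' x = 0} \ ↑s).finite_or_infinite with hT | hT
  swap
  · simp [hT.encard_eq]
  have hinter := Finset.card_le_sdiff_of_interleaved (s := s) (t := hT.toFinset) <| by
    intro x hx y hy hxy hgap
    have hIcc : Set.Icc x y ⊆ U := hU.out (hs x hx).1 (hs y hy).1
    obtain ⟨z, hz, hz0⟩ := exists_hasDerivAt_eq_zero hxy
      (fun w hw => (hd w (hIcc hw)).continuousAt.continuousWithinAt)
      ((hs x hx).2.trans (hs y hy).2.symm) (fun w hw => hd w (hIcc (Set.Ioo_subset_Icc_self hw)))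
    refine ⟨z, hT.mem_toFinset.2 ⟨⟨hIcc (Set.Ioo_subset_Icc_self hz), hz0⟩, ?_⟩, hz⟩
    exact fun hzs => hgap z hzs hz
  calc (s.card : ℕ∞) ≤ (hT.toFinset \ s).card + 1 := by exact_mod_cast hinter
    _ ≤ hT.toFinset.card + 1 := by gcongr; exact sdiff_subset
    _ = _ := by rw [hT.encard_eq_coe_toFinset_card]

theorem encard_zeros_le_encard_zeros_deriv_add_one (hU : U.OrdConnected)
    (hd : ∀ x ∈ U, HasDerivAt h (h' x) x) :
    {x ∈ U | h x = 0}.encard ≤ {x ∈ U | h' x = 0}.encard + 1 :=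
  Set.encard_le_of_forall_finset_subset fun s hs =>
    (card_le_encard_zeros_deriv_sdiff_add_one hU hd fun _ hx => hs hx).trans
      (by gcongr; exact Set.sdiff_subset)

theorem encard_zeros_le_encard_zeros_iterate_add {g : ℕ → ℝ → ℝ} (hU : U.OrdConnected)
    (hd : ∀ k, ∀ x ∈ U, HasDerivAt (g k) (g (k + 1) x) x) (m : ℕ) :
    {x ∈ U | g 0 x = 0}.encard ≤ {x ∈ U | g m x = 0}.encard + m := by
  induction m with
  | zero => simp
  | succ m ih =>
    calc _ ≤ {x ∈ U | g m x = 0}.encard + m := ih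
      _ ≤ {x ∈ U | g (m + 1) x = 0}.encard + 1 + m := by
        gcongr; exact encard_zeros_le_encard_zeros_deriv_add_one hU (hd m)
      _ = _ := by push_cast; ring

end Rolle

theorem hasDerivAt_sub_mul_of_continuousAt {𝕜 : Type*} [NontriviallyNormedField 𝕜]
    {h : 𝕜 → 𝕜} {a : 𝕜} (hh : ContinuousAt h a) :
    HasDerivAt (fun x => (x - a) * h x) (h a) a := by
  rw [hasDerivAt_iff_tendsto_slope]
  refine (hh.tendsto.mono_left nhdsWithin_le_nhds).congr' ?_
  filter_upwards [self_mem_nhdsWithin] with x hx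
  rw [slope_def_field, sub_self, zero_mul, sub_zero, mul_div_cancel_left₀ _ (sub_ne_zero.2 hx)]

namespace Polynomial

noncomputable def rpowIterDerivPoly (r : ℝ) (q : ℝ[X]) : ℕ → ℝ[X]
  | 0 => q
  | k + 1 => C (r - k) * rpowIterDerivPoly r q k + X * derivative (rpowIterDerivPoly r q k)

/-- On `(0, ∞)`, the `k`-th derivative of `x ↦ x ^ r * q.eval x - P.eval x`. -/
noncomputable def rpowMulSubIterDeriv (r : ℝ) (q P : ℝ[X]) (k : ℕ) (x : ℝ) : ℝ :=
  x ^ (r - k) * (rpowIterDerivPoly r q k).eval x - (derivative^[k] P).eval x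

variable {r : ℝ} {q : ℝ[X]}

@[simp]
theorem rpowMulSubIterDeriv_zero (r : ℝ) (q P : ℝ[X]) (x : ℝ) :
    rpowMulSubIterDeriv r q P 0 x = x ^ r * q.eval x - P.eval x := by
  simp [rpowMulSubIterDeriv, rpowIterDerivPoly]

theorem coeff_rpowIterDerivPoly (r : ℝ) (q : ℝ[X]) (k i : ℕ) :
    (rpowIterDerivPoly r q k).coeff i = (∏ j ∈ range k, (r + i - j)) * q.coeff i := by
  induction k with
  | zero => simp [rpowIterDerivPoly]
  | succ k ih =>
    have hX : (X * derivative (rpowIterDerivPoly r q k)).coeff i =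
        i * (rpowIterDerivPoly r q k).coeff i := by
      rcases i with _ | i
      · simp
      · rw [coeff_X_mul, coeff_derivative]; push_cast; ring
    rw [rpowIterDerivPoly, coeff_add, coeff_C_mul, hX, ih, prod_range_succ]
    ring

theorem natDegree_rpowIterDerivPoly_le (r : ℝ) (q : ℝ[X]) (k : ℕ) :
    (rpowIterDerivPoly r q k).natDegree ≤ q.natDegree :=
  natDegree_le_iff_coeff_eq_zero.2 fun i hi => by
    rw [coeff_rpowIterDerivPoly, coeff_eq_zero_of_natDegree_lt hi, mul_zero]

theorem rpowIterDerivPoly_ne_zero {k : ℕ} (hq : q ≠ 0) (hr : ∀ j < k, r + q.natDegree ≠ j) :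
    rpowIterDerivPoly r q k ≠ 0 := by
  have hlead : (rpowIterDerivPoly r q k).coeff q.natDegree ≠ 0 := by
    rw [coeff_rpowIterDerivPoly]
    exact mul_ne_zero (prod_ne_zero_iff.2 fun j hj => sub_ne_zero.2 (hr j (mem_range.1 hj)))
      (leadingCoeff_ne_zero.2 hq)
  exact fun h0 => hlead (by rw [h0, coeff_zero])

theorem hasDerivAt_rpow_mul_eval (r : ℝ) (q : ℝ[X]) {x : ℝ} (hx : 0 < x) :
    HasDerivAt (fun y => y ^ r * q.eval y)
      (x ^ (r - 1) * (C r * q + X * derivative q).eval x) x := by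
  refine ((Real.hasDerivAt_rpow_const (Or.inl hx.ne')).mul (q.hasDerivAt x)).congr_deriv ?_
  have hxr : x ^ r = x ^ (r - 1) * x := by rw [← Real.rpow_add_one hx.ne', sub_add_cancel]
  simp only [eval_add, eval_mul, eval_C, eval_X, hxr]
  ring

theorem hasDerivAt_rpowMulSubIterDeriv (r : ℝ) (q P : ℝ[X]) (k : ℕ) {x : ℝ} (hx : 0 < x) :
    HasDerivAt (rpowMulSubIterDeriv r q P k) (rpowMulSubIterDeriv r q P (k + 1) x) x := by
  have h : HasDerivAt (rpowMulSubIterDeriv r q P k) _ x :=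
    (hasDerivAt_rpow_mul_eval (r - k) (rpowIterDerivPoly r q k) hx).sub
      ((derivative^[k] P).hasDerivAt x)
  convert h using 1
  rw [rpowMulSubIterDeriv, rpowIterDerivPoly, Function.iterate_succ_apply', Nat.cast_succ,
    ← sub_sub]

theorem encard_zeros_rpowMulSubIterDeriv_le {P : ℝ[X]} {k : ℕ} (hq : q ≠ 0)
    (hP : P.natDegree < k) (hr : ∀ j < k, r + q.natDegree ≠ j) :
    {x ∈ Set.Ioi 0 | rpowMulSubIterDeriv r q P k x = 0}.encard ≤ q.natDegree := by
  have hQ := rpowIterDerivPoly_ne_zero (k := k) hq hr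
  calc _ ≤ ((rpowIterDerivPoly r q k).roots.toFinset : Set ℝ).encard := by
        refine Set.encard_le_encard fun x ⟨hx, hx0⟩ => ?_
        simp only [rpowMulSubIterDeriv, iterate_derivative_eq_zero hP, eval_zero, sub_zero,
          mul_eq_zero, (Real.rpow_pos_of_pos hx _).ne', false_or] at hx0
        simpa [hQ] using hx0
    _ ≤ q.natDegree := by
        rw [Set.encard_coe_eq_coe_finsetCard]
        exact_mod_cast (Multiset.toFinset_card_le _).trans
          ((card_roots' _).trans (natDegree_rpowIterDerivPoly_le r q k))

end Polynomial

namespace Lagrange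

variable {F ι : Type*} [Field F] [Fintype ι] [DecidableEq ι]

noncomputable def sumNodalErase (v a : ι → F) : F[X] :=
  ∑ i, C (a i) * nodal (univ.erase i) v

theorem natDegree_sumNodalErase_le (v a : ι → F) :
    (sumNodalErase v a).natDegree ≤ Fintype.card ι - 1 :=
  natDegree_sum_le_of_forall_le _ _ fun i _ => (natDegree_C_mul_le _ _).trans <| by
    rw [natDegree_nodal, card_erase_of_mem (mem_univ i), card_univ]

theorem eval_sumNodalErase_node (v a : ι → F) (i : ι) :
    (sumNodalErase v a).eval (v i) = a i * (nodal (univ.erase i) v).eval (v i) := by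
  rw [sumNodalErase, eval_finsetSum, sum_eq_single i]
  · simp
  · intro j _ hji
    rw [eval_mul, eval_nodal_at_node (mem_erase.2 ⟨Ne.symm hji, mem_univ i⟩), mul_zero]
  · simp

theorem sumNodalErase_ne_zero {v a : ι → F} (hv : Function.Injective v) (ha : a ≠ 0) :
    sumNodalErase v a ≠ 0 := by
  obtain ⟨i, hi⟩ := Function.ne_iff.1 ha
  intro h0
  have := eval_sumNodalErase_node v a i
  rw [h0, eval_zero] at this
  exact mul_ne_zero hi (eval_nodal_not_at_node fun k hk => hv.ne (mem_erase.1 hk).1.symm)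
    this.symm

end Lagrange

section Loewner

variable {ι : Type*} [Fintype ι]

noncomputable def loewnerFun (p c : ι → ℝ) (r x : ℝ) : ℝ :=
  ∑ j, c j * (if x = p j then r * p j ^ (r - 1) else (x ^ r - p j ^ r) / (x - p j))

theorem loewnerFun_eq_sum_dslope (p c : ι → ℝ) (r : ℝ) :
    loewnerFun p c r = fun x => ∑ j, c j * dslope (· ^ r) (p j) x := by
  funext x
  refine sum_congr rfl fun j _ => ?_
  split_ifs with hx
  · rw [hx, dslope_same, Real.deriv_rpow_const]
  · rw [dslope_of_ne _ hx, slope_def_field]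

theorem continuousAt_loewnerFun (p c : ι → ℝ) (r : ℝ) {x : ℝ}
    (hx : x ≠ 0) : ContinuousAt (loewnerFun p c r) x := by
  rw [loewnerFun_eq_sum_dslope]
  refine tendsto_finsetSum _ fun j _ => continuousAt_const.mul ?_
  rcases eq_or_ne x (p j) with rfl | hxj
  · exact continuousAt_dslope_same.2 (Real.differentiableAt_rpow_const_of_ne r hx)
  · exact (continuousAt_dslope_of_ne hxj).2 (Real.continuousAt_rpow_const _ _ (Or.inl hx))

variable [DecidableEq ι]

theorem loewnerFun_mul_eval_nodal (p c : ι → ℝ) (r x : ℝ) :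
    loewnerFun p c r x * (nodal univ p).eval x =
      x ^ r * (sumNodalErase p c).eval x - (sumNodalErase p fun j => c j * p j ^ r).eval x := by
  simp only [loewnerFun, sumNodalErase, eval_finsetSum, eval_mul, eval_C, sum_mul, mul_sum,
    ← sum_sub_distrib]
  refine sum_congr rfl fun j _ => ?_
  rw [nodal_eq_mul_nodal_erase (mem_univ j), eval_mul, eval_sub, eval_X, eval_C]
  split_ifs with hx
  · rw [hx]; ring
  · field_simp [sub_ne_zero.2 hx]

theorem rpowMulSubIterDeriv_one_eq_zero_of_loewnerFun_eq_zero {p : ι → ℝ} (hp : ∀ j, 0 < p j)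
    (c : ι → ℝ) (r : ℝ) {j : ι} (hf : loewnerFun p c r (p j) = 0) :
    rpowMulSubIterDeriv r (sumNodalErase p c) (sumNodalErase p fun j => c j * p j ^ r) 1 (p j)
      = 0 := by
  set V := nodal (univ.erase j) p
  have hfactor :
      rpowMulSubIterDeriv r (sumNodalErase p c) (sumNodalErase p fun j => c j * p j ^ r) 0
        = fun x => (x - p j) * (loewnerFun p c r x * V.eval x) := by
    funext x
    rw [rpowMulSubIterDeriv_zero, ← loewnerFun_mul_eval_nodal,
      nodal_eq_mul_nodal_erase (mem_univ j), eval_mul, eval_sub, eval_X, eval_C]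
    ring
  have hderiv := hasDerivAt_sub_mul_of_continuousAt (h := fun x => loewnerFun p c r x * V.eval x)
    ((continuousAt_loewnerFun p c r (hp j).ne').mul V.continuousAt)
  rw [← hfactor] at hderiv
  rw [(hasDerivAt_rpowMulSubIterDeriv _ _ _ 0 (hp j)).unique hderiv, hf, zero_mul]

theorem card_add_card_le_encard_zeros_add_one {p : ι → ℝ} (hp : ∀ j, 0 < p j)
    (hinj : Function.Injective p) (c : ι → ℝ) (r : ℝ) {S : Finset ℝ}
    (hS : ↑S ⊆ {x | 0 < x ∧ loewnerFun p c r x = 0}) :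
    (S.card + Fintype.card ι : ℕ∞) ≤ {x ∈ Set.Ioi 0 | rpowMulSubIterDeriv r (sumNodalErase p c)
      (sumNodalErase p fun j => c j * p j ^ r) 1 x = 0}.encard + 1 := by
  set G := rpowMulSubIterDeriv r (sumNodalErase p c) (sumNodalErase p fun j => c j * p j ^ r)
  set Z := {x ∈ Set.Ioi 0 | G 1 x = 0}
  set N := univ.image p
  have hzero : ∀ x ∈ S ∪ N, x ∈ Set.Ioi 0 ∧ G 0 x = 0 := by
    intro x hx
    simp only [G, rpowMulSubIterDeriv_zero]
    rw [← loewnerFun_mul_eval_nodal]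
    rcases mem_union.1 hx with hx | hx
    · exact ⟨(hS hx).1, by rw [(hS hx).2, zero_mul]⟩
    · obtain ⟨i, -, rfl⟩ := mem_image.1 hx
      exact ⟨hp i, by rw [eval_nodal_at_node (mem_univ i), mul_zero]⟩
  have hrolle := card_le_encard_zeros_deriv_sdiff_add_one Set.ordConnected_Ioi
    (fun x hx => hasDerivAt_rpowMulSubIterDeriv _ _ _ 0 hx) hzero
  have hdouble : ↑(S ∩ N) ⊆ Z := by
    intro x hx
    obtain ⟨hxS, hxN⟩ := mem_inter.1 hx
    obtain ⟨i, -, rfl⟩ := mem_image.1 hxN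
    exact ⟨hp i, rpowMulSubIterDeriv_one_eq_zero_of_loewnerFun_eq_zero hp c r (hS hxS).2⟩
  have hdisj : Disjoint (Z \ ↑(S ∪ N)) ↑(S ∩ N) :=
    Set.disjoint_sdiff_left.mono_right (coe_subset.2 inter_subset_union)
  calc (S.card + Fintype.card ι : ℕ∞) = (S ∪ N).card + (S ∩ N).card := by
        rw [← card_univ, ← card_image_of_injective univ hinj]
        exact_mod_cast (card_union_add_card_inter S N).symm
    _ ≤ (Z \ ↑(S ∪ N)).encard + 1 + (S ∩ N).card := add_le_add_left hrolle _
    _ = (Z \ ↑(S ∪ N) ∪ ↑(S ∩ N)).encard + 1 := by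
        rw [Set.encard_union_eq hdisj, Set.encard_coe_eq_coe_finsetCard, add_right_comm]
    _ ≤ Z.encard + 1 := by gcongr; exact Set.union_subset Set.sdiff_subset hdouble

end Loewner

/-- If `c : Fin n → ℝ` is not identically zero and `r > 0` is different from
`1, 2, …, n-1`, then the function `f x = ∑ j, c j * (x^r - (p j)^r)/(x - p j)`
(with the quotient interpreted as `r * (p j)^(r-1)` at `x = p j`) has at most
`n - 1` zeros in `(0, ∞)`. -/
theorem loewner_function_few_zeros {n : ℕ} (p : Fin n → ℝ)
    (hp : ∀ i, 0 < p i) (hmono : StrictMono p)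
    (c : Fin n → ℝ) (hc : c ≠ 0)
    (r : ℝ) (hr : 0 < r) (hri : ∀ k : ℕ, 1 ≤ k → k ≤ n - 1 → r ≠ (k : ℝ)) :
    {x : ℝ | 0 < x ∧
        (∑ j, c j * (if x = p j then r * p j ^ (r - 1) else (x ^ r - p j ^ r) / (x - p j)))
          = 0}.Finite ∧
    {x : ℝ | 0 < x ∧
        (∑ j, c j * (if x = p j then r * p j ^ (r - 1) else (x ^ r - p j ^ r) / (x - p j)))
          = 0}.ncard ≤ n - 1 := by
  have hn : 0 < n := (Function.ne_iff.1 hc).choose.pos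
  set Q := sumNodalErase p c
  set P := sumNodalErase p fun j => c j * p j ^ r
  set G := rpowMulSubIterDeriv r Q P
  have hQdeg : Q.natDegree ≤ n - 1 := by simpa using natDegree_sumNodalErase_le p c
  have hPdeg : P.natDegree < n := (natDegree_sumNodalErase_le p _).trans_lt (by simp; omega)
  have hrQ : ∀ j < n, r + Q.natDegree ≠ j := by
    intro j hj hrj
    have hlt : Q.natDegree < j := by exact_mod_cast (lt_add_of_pos_left _ hr).trans_eq hrj
    exact hri (j - Q.natDegree) (by omega) (by omega) (by push_cast [hlt.le]; linarith)
  have hZn : {x ∈ Set.Ioi 0 | G n x = 0}.encard ≤ (n - 1 : ℕ) :=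
    (encard_zeros_rpowMulSubIterDeriv_le (sumNodalErase_ne_zero hmono.injective hc) hPdeg hrQ).trans
      (by exact_mod_cast hQdeg)
  have hZ1 : {x ∈ Set.Ioi 0 | G 1 x = 0}.encard ≤
      {x ∈ Set.Ioi 0 | G n x = 0}.encard + (n - 1 : ℕ) := by
    have := encard_zeros_le_encard_zeros_iterate_add (g := fun k => G (k + 1)) Set.ordConnected_Ioi
      (fun k x hx => hasDerivAt_rpowMulSubIterDeriv r Q P (k + 1) hx) (n - 1)
    rwa [Nat.sub_add_cancel hn] at this
  refine Set.encard_le_coe_iff_finite_ncard_le.1 <|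
    Set.encard_le_of_forall_finset_subset fun S hS => ?_
  have hS := card_add_card_le_encard_zeros_add_one hp hmono.injective c r hS
  rw [Fintype.card_fin] at hS
  have : (S.card + n : ℕ∞) ≤ (n - 1 : ℕ) + (n - 1 : ℕ) + 1 := by
    calc _ ≤ _ := hS
      _ ≤ _ := by gcongr; exact hZ1.trans (by gcongr)
  norm_cast at this ⊢
  omega
end

section
/- Let 0 < p_1 < p_2 < ... < p_n, let r be a real number, and let D = diag(p_1, ..., p_n). Then L_{-r} = -D^{-r} L_r D^{-r}, where D^{-r} = diag(p_1^{-r}, ..., p_n^{-r}). Consequently, the inertia of L_{-r} is the reverse of the inertia of L_r: π(L_{-r}) = ν(L_r), ζ(L_{-r}) = ζ(L_r), and ν(L_{-r}) = π(L_r). -/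
open Matrix

/-!
The identity `L_{-r} = -D^{-r} L_r D^{-r}` is an entrywise computation; it makes the quadratic
form of `L_{-r}` equivalent to the negative of that of `L_r`. The spectral theorem diagonalizes
the quadratic form of a real symmetric matrix with its eigenvalues as weights, so by Sylvester's
law of inertia the numbers of positive, zero and negative eigenvalues are the invariants
`sigPos`, `finrank radical` and `sigNeg` of the form, and negating the form swaps the first and
the last.
-/

open QuadraticMap QuadraticForm

lemma QuadraticMap.radical_neg {R M P : Type*} [CommRing R] [AddCommGroup M] [Module R M]
    [AddCommGroup P] [Module R P] (Q : QuadraticMap R M P) : (-Q).radical = Q.radical := by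
  ext m
  simp [mem_radical_iff']

namespace Matrix
variable {R ι : Type*} [CommRing R] [Fintype ι] [DecidableEq ι]

lemma toQuadraticForm'_apply (A : Matrix ι ι R) (x : ι → R) :
    A.toQuadraticForm' x = x ⬝ᵥ A *ᵥ x := by
  simp [toQuadraticForm', toLinearMap₂'_apply']

lemma toQuadraticForm'_neg (A : Matrix ι ι R) : (-A).toQuadraticForm' = -A.toQuadraticForm' := by
  ext x
  simp [toQuadraticForm'_apply, neg_mulVec]

lemma toQuadraticForm'_diagonal (w : ι → R) :
    (diagonal w).toQuadraticForm' = weightedSumSquares R w := by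
  ext x
  simp only [toQuadraticForm'_apply, weightedSumSquares_apply, dotProduct, mulVec_diagonal,
    smul_eq_mul, mul_left_comm]

lemma toQuadraticForm'_transpose_mul_mul (A S : Matrix ι ι R) :
    (Sᵀ * A * S).toQuadraticForm' = A.toQuadraticForm'.comp (toLin' S) := by
  ext x
  simp [toQuadraticForm'_apply, ← mulVec_mulVec, dotProduct_mulVec, vecMul_transpose]

lemma equivalent_toQuadraticForm'_transpose_mul_mul (A : Matrix ι ι R) {S : Matrix ι ι R}
    (hS : IsUnit S) : A.toQuadraticForm'.Equivalent (Sᵀ * A * S).toQuadraticForm' := by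
  rw [toQuadraticForm'_transpose_mul_mul]
  exact ⟨isometryEquivOfCompLinearEquiv _ (S.toLinearEquiv' hS.invertible)⟩

end Matrix

namespace Matrix.IsHermitian
variable {ι : Type*} [Fintype ι] [DecidableEq ι] {A : Matrix ι ι ℝ}

lemma equivalent_weightedSumSquares (hA : A.IsHermitian) :
    A.toQuadraticForm'.Equivalent (weightedSumSquares ℝ hA.eigenvalues) := by
  set U := (hA.eigenvectorUnitary : Matrix ι ι ℝ)
  have hdiag : Uᵀ * A * U = diagonal hA.eigenvalues := by
    simpa [U, Unitary.conjStarAlgAut_star_apply, star_eq_conjTranspose]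
      using hA.conjStarAlgAut_star_eigenvectorUnitary
  rw [← toQuadraticForm'_diagonal, ← hdiag]
  exact A.equivalent_toQuadraticForm'_transpose_mul_mul (Unitary.isUnit_coe ..)

lemma card_pos_eigenvalues (hA : A.IsHermitian) :
    Fintype.card {i // 0 < hA.eigenvalues i} = sigPos A.toQuadraticForm' := by
  rw [sigPos_of_equiv_weightedSumSquares hA.equivalent_weightedSumSquares,
    Set.ncard_eq_toFinset_card', Set.toFinset_card]
  rfl

lemma card_neg_eigenvalues (hA : A.IsHermitian) :
    Fintype.card {i // hA.eigenvalues i < 0} = sigNeg A.toQuadraticForm' := by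
  rw [sigNeg_of_equiv_weightedSumSquares hA.equivalent_weightedSumSquares,
    Set.ncard_eq_toFinset_card', Set.toFinset_card]
  rfl

lemma card_eigenvalues_eq_zero (hA : A.IsHermitian) :
    Fintype.card {i // hA.eigenvalues i = 0} = Module.finrank ℝ A.toQuadraticForm'.radical := by
  rw [finrank_radical_of_equiv_weightedSumSquares hA.equivalent_weightedSumSquares,
    Set.ncard_eq_toFinset_card', Set.toFinset_card]
  rfl

end Matrix.IsHermitian

theorem loewner_neg {n : ℕ} {p : Fin n → ℝ} (hp : ∀ i, 0 < p i) (hinj : Function.Injective p)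
    (r : ℝ) :
    loewner p (-r) =
      -(diagonal (fun i => p i ^ (-r)) * loewner p r * diagonal (fun i => p i ^ (-r))) := by
  ext i j
  rw [neg_apply, mul_diagonal, diagonal_mul]
  by_cases hij : i = j
  · subst hij
    simp only [loewner, of_apply, if_true]
    rw [show -r - 1 = -r + (r - 1) + -r by ring, Real.rpow_add (hp i), Real.rpow_add (hp i)]
    ring
  · have hpij : p i - p j ≠ 0 := sub_ne_zero.mpr (hinj.ne hij)
    have hpow (k : Fin n) : p k ^ r ≠ 0 := (Real.rpow_pos_of_pos (hp k) r).ne'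
    simp only [loewner, of_apply, if_neg hij, Real.rpow_neg (hp i).le, Real.rpow_neg (hp j).le]
    field_simp [hpow i, hpow j]
    ring

/-- With `D^{-r} = diag(p 0 ^ (-r), …)` one has `L_{-r} = - D^{-r} L_r D^{-r}`, and
consequently the inertia of `L_{-r}` is the reverse of the inertia of `L_r`. -/
theorem loewner_neg_exponent {n : ℕ} (p : Fin n → ℝ)
    (hp : ∀ i, 0 < p i) (hmono : StrictMono p) (r : ℝ)
    (hA : (loewner p r).IsHermitian) (hB : (loewner p (-r)).IsHermitian) :
    loewner p (-r) =
      -(Matrix.diagonal (fun i => p i ^ (-r)) * loewner p r *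
        Matrix.diagonal (fun i => p i ^ (-r))) ∧
    Fintype.card {i // 0 < hB.eigenvalues i} = Fintype.card {i // hA.eigenvalues i < 0} ∧
    Fintype.card {i // hB.eigenvalues i = 0} = Fintype.card {i // hA.eigenvalues i = 0} ∧
    Fintype.card {i // hB.eigenvalues i < 0} = Fintype.card {i // 0 < hA.eigenvalues i} := by
  set D := diagonal fun i => p i ^ (-r)
  have hneg : loewner p (-r) = -(D * loewner p r * D) := loewner_neg hp hmono.injective r
  have hD : IsUnit D := isUnit_diagonal.mpr <| Pi.isUnit_iff.mpr fun i =>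
    (Real.rpow_pos_of_pos (hp i) _).ne'.isUnit
  have hcongr : loewner p (-r) = Dᵀ * -loewner p r * D := by
    rw [hneg, Matrix.mul_neg, Matrix.neg_mul, show Dᵀ = D from diagonal_transpose _]
  have hequiv : (loewner p (-r)).toQuadraticForm'.Equivalent (-(loewner p r).toQuadraticForm') := by
    rw [hcongr, ← toQuadraticForm'_neg]
    exact ((-loewner p r).equivalent_toQuadraticForm'_transpose_mul_mul hD).symm
  refine ⟨hneg, ?_, ?_, ?_⟩
  · rw [hB.card_pos_eigenvalues, hA.card_neg_eigenvalues, hequiv.sigPos_eq, sigPos_neg]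
  · rw [hB.card_eigenvalues_eq_zero, hA.card_eigenvalues_eq_zero, hequiv.rank_radical_eq,
      QuadraticMap.radical_neg]
  · rw [hB.card_neg_eigenvalues, hA.card_pos_eigenvalues, hequiv.sigNeg_eq, sigNeg_neg]
end

section
/- Let 0 < p_1 < p_2 be real numbers and let r > 0, and consider the 2 × 2 Loewner matrix L_r. Then det(L_r) > 0 if 0 < r < 1, det(L_r) = 0 if r = 1, and det(L_r) < 0 if r > 1. Consequently L_r always has one positive eigenvalue, and its other eigenvalue is positive, zero, or negative according as 0 < r < 1, r = 1, or r > 1. -/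
/-!
Write `p 0 = exp (s - t)`, `p 1 = exp (s + t)` with `t > 0`. Then
`det L_r = exp (2 (r - 1) s) ((r sinh t)² - sinh (r t)²) / sinh² t`, and since `sinh` is strictly
convex on `[0, ∞)` and vanishes at `0`, `sinh (r t)` is smaller than `r sinh t` for `r < 1` and
larger for `r > 1`. The trace of `L_r` is positive, so the eigenvalues, whose sum is the trace and
whose product is the determinant, have the stated signs.
-/

open Matrix

open Real Set

theorem StrictConvexOn.apply_mul_lt_mul_apply {f : ℝ → ℝ} (hf : StrictConvexOn ℝ (Ici 0) f)
    (hf₀ : f 0 = 0) {r t : ℝ} (hr₀ : 0 < r) (hr₁ : r < 1) (ht : 0 < t) :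
    f (r * t) < r * f t := by
  simpa [hf₀] using hf.2 (mem_Ici.2 ht.le) self_mem_Ici ht.ne' hr₀ (sub_pos.2 hr₁) (by ring)

theorem StrictConvexOn.mul_apply_lt_apply_mul {f : ℝ → ℝ} (hf : StrictConvexOn ℝ (Ici 0) f)
    (hf₀ : f 0 = 0) {r t : ℝ} (hr : 1 < r) (ht : 0 < t) :
    r * f t < f (r * t) := by
  have hr₀ : 0 < r := one_pos.trans hr
  have h := hf.apply_mul_lt_mul_apply hf₀ (inv_pos.2 hr₀) (inv_lt_one_of_one_lt₀ hr)
    (mul_pos hr₀ ht)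
  rw [inv_mul_cancel_left₀ hr₀.ne'] at h
  calc r * f t < r * (r⁻¹ * f (r * t)) := mul_lt_mul_of_pos_left h hr₀
    _ = f (r * t) := mul_inv_cancel_left₀ hr₀.ne' _

theorem Real.strictConvexOn_sinh : StrictConvexOn ℝ (Ici 0) sinh := by
  refine StrictMonoOn.strictConvexOn_of_deriv (convex_Ici 0) continuous_sinh.continuousOn ?_
  rw [deriv_sinh]
  exact cosh_strictMonoOn.mono interior_subset

theorem Real.exp_add_sub_exp_sub_s12 (s t : ℝ) : exp (s + t) - exp (s - t) = 2 * exp s * sinh t := by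
  rw [sinh_eq, exp_add, exp_sub, exp_neg]
  field_simp

theorem trace_loewner {n : ℕ} (p : Fin n → ℝ) (r : ℝ) :
    (loewner p r).trace = ∑ i, r * p i ^ (r - 1) := by
  simp [Matrix.trace, loewner]

theorem trace_loewner_pos {n : ℕ} [NeZero n] {p : Fin n → ℝ} (hp : ∀ i, 0 < p i) {r : ℝ}
    (hr : 0 < r) : 0 < (loewner p r).trace := by
  rw [trace_loewner]
  exact Finset.sum_pos (fun i _ => mul_pos hr (rpow_pos_of_pos (hp i) _)) Finset.univ_nonempty

theorem exists_eq_exp_sub_exp_add {p : Fin 2 → ℝ} (hp : ∀ i, 0 < p i) (hmono : StrictMono p) :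
    ∃ s t, 0 < t ∧ p = ![exp (s - t), exp (s + t)] := by
  refine ⟨(log (p 0) + log (p 1)) / 2, (log (p 1) - log (p 0)) / 2,
    by linarith [log_lt_log (hp 0) (hmono Fin.zero_lt_one)],
    funext (Fin.forall_fin_two.2 ⟨?_, ?_⟩)⟩
  · simp only [cons_val_zero]; ring_nf; exact (exp_log (hp 0)).symm
  · simp only [cons_val_one]; ring_nf; exact (exp_log (hp 1)).symm

theorem det_loewner_exp (s t r : ℝ) (ht : t ≠ 0) :
    (loewner ![exp (s - t), exp (s + t)] r).det =
      exp ((r - 1) * s) ^ 2 * ((r * sinh t) ^ 2 - sinh (r * t) ^ 2) / sinh t ^ 2 := by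
  simp only [loewner, det_fin_two, Fin.isValue, of_apply, ↓reduceIte, cons_val_zero,
    cons_val_one, cons_val_fin_one, zero_ne_one, one_ne_zero]
  have hnum : exp (s + t) ^ r - exp (s - t) ^ r = 2 * exp (r * s) * sinh (r * t) := by
    rw [← exp_mul, ← exp_mul, ← exp_add_sub_exp_sub_s12]; ring_nf
  have hdiag : exp (s - t) ^ (r - 1) * exp (s + t) ^ (r - 1) = exp (s * (r - 1)) ^ 2 := by
    rw [← exp_mul, ← exp_mul, sq, ← exp_add, ← exp_add]; ring_nf
  have hmid : exp (r * s) = exp ((r - 1) * s) * exp s := by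
    rw [← exp_add]; ring_nf
  rw [← neg_sub (exp (s + t) ^ r), ← neg_sub (exp (s + t)), neg_div_neg_eq, hnum,
    exp_add_sub_exp_sub_s12, hmid]
  field_simp
  linear_combination (r ^ 2 * sinh t ^ 2) * hdiag

theorem det_loewner_exp_pos {s t r : ℝ} (ht : 0 < t) (hr₀ : 0 < r) (hr₁ : r < 1) :
    0 < (loewner ![exp (s - t), exp (s + t)] r).det := by
  have hlt := strictConvexOn_sinh.apply_mul_lt_mul_apply sinh_zero hr₀ hr₁ ht
  have hpos : 0 < sinh (r * t) := sinh_pos_iff.2 (mul_pos hr₀ ht)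
  have hsq : sinh (r * t) ^ 2 < (r * sinh t) ^ 2 := pow_lt_pow_left₀ hlt hpos.le two_ne_zero
  rw [det_loewner_exp s t r ht.ne']
  exact div_pos (mul_pos (by positivity) (sub_pos.2 hsq)) (pow_pos (sinh_pos_iff.2 ht) 2)

theorem det_loewner_exp_neg {s t r : ℝ} (ht : 0 < t) (hr : 1 < r) :
    (loewner ![exp (s - t), exp (s + t)] r).det < 0 := by
  have hlt := strictConvexOn_sinh.mul_apply_lt_apply_mul sinh_zero hr ht
  have hpos : 0 < r * sinh t := mul_pos (one_pos.trans hr) (sinh_pos_iff.2 ht)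
  have hsq : (r * sinh t) ^ 2 < sinh (r * t) ^ 2 := pow_lt_pow_left₀ hlt hpos.le two_ne_zero
  rw [det_loewner_exp s t r ht.ne']
  exact div_neg_of_neg_of_pos (mul_neg_of_pos_of_neg (by positivity) (sub_neg.2 hsq))
    (pow_pos (sinh_pos_iff.2 ht) 2)

theorem det_loewner_exp_one {s t : ℝ} (ht : t ≠ 0) :
    (loewner ![exp (s - t), exp (s + t)] 1).det = 0 := by
  simp [det_loewner_exp s t 1 ht]

theorem Fin.card_subtype_eq_one_of_xor {P : Fin 2 → Prop} [DecidablePred P]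
    (h : Xor (P 0) (P 1)) : Fintype.card {i // P i} = 1 := by
  rw [Fintype.card_subtype, Finset.card_filter, Fin.sum_univ_two]
  rcases h with ⟨h₀, h₁⟩ | ⟨h₁, h₀⟩ <;> simp [h₀, h₁]

namespace Matrix.IsHermitian

theorem exists_eigenvalues_pos_of_trace_pos {n : Type*} [Fintype n] [DecidableEq n]
    {A : Matrix n n ℝ} (hA : A.IsHermitian) (h : 0 < A.trace) :
    ∃ i, 0 < hA.eigenvalues i := by
  rw [hA.trace_eq_sum_eigenvalues] at h
  by_contra! hle
  exact not_lt.2 (Finset.sum_nonpos fun i _ => hle i) (by simpa using h)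

section FinTwo

variable {A : Matrix (Fin 2) (Fin 2) ℝ} (hA : A.IsHermitian)
include hA

theorem eigenvalues_fin_two_add : hA.eigenvalues 0 + hA.eigenvalues 1 = A.trace := by
  simp [hA.trace_eq_sum_eigenvalues, Fin.sum_univ_two]

theorem eigenvalues_fin_two_mul : hA.eigenvalues 0 * hA.eigenvalues 1 = A.det := by
  simp [hA.det_eq_prod_eigenvalues, Fin.prod_univ_two]

theorem eigenvalues_pos_of_det_pos (htr : 0 < A.trace) (hdet : 0 < A.det) :
    ∀ i, 0 < hA.eigenvalues i := by
  rw [← hA.eigenvalues_fin_two_add] at htr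
  rw [← hA.eigenvalues_fin_two_mul] at hdet
  rcases pos_and_pos_or_neg_and_neg_of_mul_pos hdet with ⟨h₀, h₁⟩ | ⟨h₀, h₁⟩
  · exact Fin.forall_fin_two.2 ⟨h₀, h₁⟩
  · linarith

theorem card_eigenvalues_pos_eq_one (htr : 0 < A.trace) (hdet : A.det ≤ 0) :
    Fintype.card {i // 0 < hA.eigenvalues i} = 1 := by
  rw [← hA.eigenvalues_fin_two_add] at htr
  rw [← hA.eigenvalues_fin_two_mul] at hdet
  apply Fin.card_subtype_eq_one_of_xor
  rcases lt_or_ge 0 (hA.eigenvalues 0) with h₀ | h₀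
  · exact Or.inl ⟨h₀, fun h₁ => (mul_pos h₀ h₁).not_ge hdet⟩
  · exact Or.inr ⟨by linarith, not_lt.2 h₀⟩

theorem card_eigenvalues_eq_zero_eq_one (htr : 0 < A.trace) (hdet : A.det = 0) :
    Fintype.card {i // hA.eigenvalues i = 0} = 1 := by
  rw [← hA.eigenvalues_fin_two_add] at htr
  rw [← hA.eigenvalues_fin_two_mul] at hdet
  apply Fin.card_subtype_eq_one_of_xor
  rcases mul_eq_zero.1 hdet with h₀ | h₁
  · exact Or.inl ⟨h₀, by linarith⟩
  · exact Or.inr ⟨h₁, by linarith⟩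

theorem card_eigenvalues_neg_eq_one (hdet : A.det < 0) :
    Fintype.card {i // hA.eigenvalues i < 0} = 1 := by
  rw [← hA.eigenvalues_fin_two_mul] at hdet
  apply Fin.card_subtype_eq_one_of_xor
  rcases mul_neg_iff.1 hdet with ⟨h₀, h₁⟩ | ⟨h₀, h₁⟩
  · exact Or.inr ⟨h₁, not_lt.2 h₀.le⟩
  · exact Or.inl ⟨h₀, not_lt.2 h₁.le⟩

end FinTwo

end Matrix.IsHermitian

/-- For `0 < p 0 < p 1` and `r > 0`, the determinant of the `2 × 2` Loewner matrix
`L_r` is positive for `0 < r < 1`, zero for `r = 1` and negative for `r > 1`.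
Consequently `L_r` always has one positive eigenvalue, while the other eigenvalue is
positive, zero, or negative according as `0 < r < 1`, `r = 1`, or `r > 1`. -/
theorem loewner_two_by_two (p : Fin 2 → ℝ) (hp : ∀ i, 0 < p i) (hmono : StrictMono p)
    (r : ℝ) (hr : 0 < r) (hA : (loewner p r).IsHermitian) :
    ((r < 1 → 0 < (loewner p r).det) ∧
     (r = 1 → (loewner p r).det = 0) ∧
     (1 < r → (loewner p r).det < 0)) ∧
    (∃ i, 0 < hA.eigenvalues i) ∧
    (r < 1 → ∀ i, 0 < hA.eigenvalues i) ∧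
    (r = 1 → Fintype.card {i // 0 < hA.eigenvalues i} = 1 ∧
      Fintype.card {i // hA.eigenvalues i = 0} = 1) ∧
    (1 < r → Fintype.card {i // 0 < hA.eigenvalues i} = 1 ∧
      Fintype.card {i // hA.eigenvalues i < 0} = 1) := by
  have htr := trace_loewner_pos hp hr
  obtain ⟨s, t, ht, rfl⟩ := exists_eq_exp_sub_exp_add hp hmono
  refine ⟨⟨det_loewner_exp_pos ht hr, fun h => h ▸ det_loewner_exp_one ht.ne',
    det_loewner_exp_neg ht⟩, hA.exists_eigenvalues_pos_of_trace_pos htr,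
    fun h => hA.eigenvalues_pos_of_det_pos htr (det_loewner_exp_pos ht hr h), ?_, ?_⟩
  · rintro rfl
    have hdet := det_loewner_exp_one (s := s) ht.ne'
    exact ⟨hA.card_eigenvalues_pos_eq_one htr hdet.le,
      hA.card_eigenvalues_eq_zero_eq_one htr hdet⟩
  · intro h
    have hdet := det_loewner_exp_neg (s := s) ht h
    exact ⟨hA.card_eigenvalues_pos_eq_one htr hdet.le, hA.card_eigenvalues_neg_eq_one hdet⟩
end

section
/- Let 0 < p_1 < p_2 < ... < p_n and 0 < q_1 < q_2 < ... < q_n be two n-tuples of positive real numbers with p_i ≠ q_j for all i, j, and let r be a positive real number different from 1, 2, ..., n-1. Then the n × n matrix with (i,j) entry (p_i^r - q_j^r)/(p_i - q_j) is nonsingular. -/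
open Matrix

/-!
Suppose `M v = 0` with `v ≠ 0`, where `M` is the matrix of the theorem. Put
`A = ∑ⱼ vⱼ ∏_{k ≠ j} (X - q_k)` and `B = ∑ⱼ vⱼ q_j^r ∏_{k ≠ j} (X - q_k)`, polynomials of degree
`< n`. The function `g x = x^r A(x) - B(x)` vanishes at every `q_j` and, since
`g(p_i) = ∏_k (p_i - q_k) · (M v)_i`, at every `p_i`: it has `2n` distinct positive zeros.
But `g` is a combination of the `2n` powers `x^(r+k)`, `x^k` (`k < n`), whose exponents are
distinct because `r ∉ {1, …, n-1}`, and by the generalized Descartes rule (induction on the number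
of terms, with Rolle's theorem) such a combination with as many positive zeros as terms is zero.
Hence `A = 0`, and evaluating `A` at `q_j` gives `vⱼ = 0`.
-/

open Polynomial Finset

theorem exists_strictMono_pos_zeros_deriv {m : ℕ} {f f' : ℝ → ℝ}
    (hf : ∀ x, 0 < x → HasDerivAt f (f' x) x) {z : Fin (m + 1) → ℝ} (hz : StrictMono z)
    (hz_pos : ∀ j, 0 < z j) (hfz : ∀ j, f (z j) = 0) :
    ∃ w : Fin m → ℝ, StrictMono w ∧ (∀ j, 0 < w j) ∧ ∀ j, f' (w j) = 0 := by
  have hrolle (j : Fin m) : ∃ c ∈ Set.Ioo (z j.castSucc) (z j.succ), f' c = 0 :=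
    exists_hasDerivAt_eq_zero (hz Fin.castSucc_lt_succ)
      (fun x hx => (hf x ((hz_pos _).trans_le hx.1)).continuousAt.continuousWithinAt)
      ((hfz _).trans (hfz _).symm) (fun x hx => hf x ((hz_pos _).trans hx.1))
  choose w hw hw_zero using hrolle
  refine ⟨w, fun j j' hjj' => ?_, fun j => (hz_pos _).trans (hw j).1, hw_zero⟩
  calc w j < z j.succ := (hw j).2
    _ ≤ z j'.castSucc := hz.monotone (Fin.succ_le_castSucc_iff.mpr hjj')
    _ < w j' := (hw j').1

theorem eq_zero_of_sum_mul_rpow_eq_zero_of_strictMono :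
    ∀ {m : ℕ} {c e : Fin m → ℝ}, Function.Injective e → ∀ {z : Fin m → ℝ}, StrictMono z →
      (∀ j, 0 < z j) → (∀ j, ∑ i, c i * z j ^ e i = 0) → c = 0
  | 0, _, _, _, _, _, _, _ => funext fun i => i.elim0
  | m + 1, c, e, he, z, hz, hz_pos, hzero => by
    set f : ℝ → ℝ := fun x => ∑ i, c i * x ^ (e i - e 0)
    set f' : ℝ → ℝ := fun x =>
      ∑ i : Fin m, c i.succ * (e i.succ - e 0) * x ^ (e i.succ - e 0 - 1)
    have hf (x : ℝ) (hx : 0 < x) : HasDerivAt f (f' x) x := by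
      refine (HasDerivAt.fun_sum fun i _ =>
        (Real.hasDerivAt_rpow_const (p := e i - e 0) (Or.inl hx.ne')).const_mul (c i)).congr_deriv ?_
      simp [f', Fin.sum_univ_succ, mul_assoc]
    -- dividing by `x ^ e 0` makes the first exponent `0`, so its term drops out of `f'`
    have hfz (j : Fin (m + 1)) : f (z j) = 0 := by
      have hdiv : f (z j) = (∑ i, c i * z j ^ e i) / z j ^ e 0 := by
        simp only [f, sum_div, Real.rpow_sub (hz_pos j), mul_div_assoc]
      rw [hdiv, hzero, zero_div]
    obtain ⟨w, hw, hw_pos, hw_zero⟩ := exists_strictMono_pos_zeros_deriv hf hz hz_pos hfz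
    have he' : Function.Injective fun i : Fin m => e i.succ - e 0 - 1 := fun i i' h =>
      Fin.succ_injective _ (he (by simpa using h))
    have hsucc (i : Fin m) : c i.succ = 0 := by
      have := congrFun (eq_zero_of_sum_mul_rpow_eq_zero_of_strictMono he' hw hw_pos hw_zero) i
      exact (mul_eq_zero.mp this).resolve_right
        (sub_ne_zero.mpr fun h => Fin.succ_ne_zero i (he h))
    have h0 : c 0 * z 0 ^ e 0 = 0 := by simpa [Fin.sum_univ_succ, hsucc] using hzero 0
    funext i
    refine Fin.cases ?_ hsucc i
    exact (mul_eq_zero.mp h0).resolve_right (Real.rpow_pos_of_pos (hz_pos 0) _).ne'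

theorem eq_zero_of_sum_mul_rpow_eq_zero {ι : Type*} [Fintype ι] {c e : ι → ℝ}
    (he : Function.Injective e) {s : Finset ℝ} (hs : ∀ x ∈ s, 0 < x)
    (hcard : Fintype.card ι ≤ #s) (hzero : ∀ x ∈ s, ∑ i, c i * x ^ e i = 0) : c = 0 := by
  let σ := Fintype.equivFin ι
  let z : Fin (Fintype.card ι) → ℝ := fun j => s.orderEmbOfFin rfl (Fin.castLE hcard j)
  have hz_mem (j) : z j ∈ s := s.orderEmbOfFin_mem rfl _
  have hc := eq_zero_of_sum_mul_rpow_eq_zero_of_strictMono (c := c ∘ σ.symm)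
    (he.comp σ.symm.injective) ((s.orderEmbOfFin rfl).strictMono.comp (Fin.strictMono_castLE _))
    (fun j => hs _ (hz_mem j))
    fun j => (σ.symm.sum_comp fun i => c i * z j ^ e i).trans (hzero _ (hz_mem j))
  funext i
  simpa using congrFun hc (σ i)

theorem Polynomial.eq_zero_of_degree_lt_of_coeff_fin {n : ℕ} {P : ℝ[X]} (hP : P.degree < n)
    (hcoeff : ∀ k : Fin n, P.coeff k = 0) : P = 0 := by
  ext k
  by_cases hk : k < n
  · exact hcoeff ⟨k, hk⟩
  · exact coeff_eq_zero_of_degree_lt (hP.trans_le (by exact_mod_cast not_lt.mp hk))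

theorem add_natCast_ne_natCast {n : ℕ} {r : ℝ} (hr : 0 < r)
    (hri : ∀ k : ℕ, 1 ≤ k → k ≤ n - 1 → r ≠ (k : ℝ)) {k k' : ℕ} (hk' : k' < n) :
    r + k ≠ k' := by
  intro h
  have hkk' : k < k' := by exact_mod_cast (show (k : ℝ) < k' by linarith)
  exact hri (k' - k) (by omega) (by omega) (by push_cast [Nat.cast_sub hkk'.le]; linarith)

theorem sum_coeff_mul_rpow_eq_rpow_mul_eval_sub_eval {n : ℕ} (r : ℝ) {P Q : ℝ[X]}
    (hP : P.degree < n) (hQ : Q.degree < n) {x : ℝ} (hx : 0 < x) :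
    ∑ i : Fin n ⊕ Fin n, Sum.elim (fun k : Fin n => P.coeff k) (fun k : Fin n => -Q.coeff k) i *
      x ^ Sum.elim (fun k : Fin n => r + k) (fun k : Fin n => (k : ℝ)) i =
      x ^ r * P.eval x - Q.eval x := by
  simp only [Fintype.sum_sum_type, Sum.elim_inl, Sum.elim_inr, Real.rpow_add hx,
    Real.rpow_natCast, eval_eq_sum, ← sum_fin (fun k a => a * x ^ k) (fun _ => zero_mul _) hP,
    ← sum_fin (fun k a => a * x ^ k) (fun _ => zero_mul _) hQ, mul_sum]
  rw [sub_eq_add_neg, ← sum_neg_distrib]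
  congr 1 <;> exact sum_congr rfl fun k _ => by ring

theorem eq_zero_of_rpow_mul_eval_sub_eval_eq_zero {n : ℕ} {r : ℝ} (hr : 0 < r)
    (hri : ∀ k : ℕ, 1 ≤ k → k ≤ n - 1 → r ≠ (k : ℝ)) {P Q : ℝ[X]} (hP : P.degree < n)
    (hQ : Q.degree < n) {s : Finset ℝ} (hs : ∀ x ∈ s, 0 < x) (hcard : n + n ≤ #s)
    (hzero : ∀ x ∈ s, x ^ r * P.eval x - Q.eval x = 0) : P = 0 ∧ Q = 0 := by
  have he : Function.Injective (Sum.elim (fun k : Fin n => r + k) (fun k : Fin n => (k : ℝ))) :=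
    Function.Injective.sumElim (fun k k' h => Fin.ext (by simpa using h))
      (fun k k' h => Fin.ext (by simpa using h)) fun k k' => add_natCast_ne_natCast hr hri k'.isLt
  have hc := eq_zero_of_sum_mul_rpow_eq_zero he hs (by simpa using hcard) fun x hx =>
    (sum_coeff_mul_rpow_eq_rpow_mul_eval_sub_eval r hP hQ (hs x hx)).trans (hzero x hx)
  exact ⟨eq_zero_of_degree_lt_of_coeff_fin hP fun k => congrFun hc (.inl k),
    eq_zero_of_degree_lt_of_coeff_fin hQ fun k => neg_eq_zero.mp (congrFun hc (.inr k))⟩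

section WeightedNodalSum

variable {ι : Type*} [Fintype ι] [DecidableEq ι] (q : ι → ℝ)

noncomputable def weightedNodalSum (w : ι → ℝ) : ℝ[X] :=
  ∑ j, C (w j) * Lagrange.nodal (univ.erase j) q

theorem eval_weightedNodalSum (w : ι → ℝ) (x : ℝ) :
    (weightedNodalSum q w).eval x = ∑ j, w j * ∏ k ∈ univ.erase j, (x - q k) := by
  simp [weightedNodalSum, eval_finsetSum, Lagrange.eval_nodal]

theorem degree_weightedNodalSum_lt (w : ι → ℝ) :
    (weightedNodalSum q w).degree < Fintype.card ι := by
  rw [← mem_degreeLT]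
  refine Submodule.sum_mem _ fun j _ => ?_
  have : Nonempty ι := ⟨j⟩
  rw [← smul_eq_C_mul]
  refine Submodule.smul_mem _ _ (mem_degreeLT.mpr ?_)
  rw [Lagrange.degree_nodal, card_erase_of_mem (mem_univ j), card_univ]
  exact_mod_cast Nat.sub_lt Fintype.card_pos one_pos

theorem eval_weightedNodalSum_node (w : ι → ℝ) (j : ι) :
    (weightedNodalSum q w).eval (q j) = w j * ∏ k ∈ univ.erase j, (q j - q k) := by
  rw [eval_weightedNodalSum, sum_eq_single j]
  · intro i _ hij
    rw [prod_eq_zero (mem_erase.mpr ⟨Ne.symm hij, mem_univ j⟩) (sub_self _), mul_zero]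
  · simp

theorem eq_zero_of_weightedNodalSum_eq_zero {q} (hq : Function.Injective q) {w : ι → ℝ}
    (h : weightedNodalSum q w = 0) : w = 0 := by
  funext j
  have hj := eval_weightedNodalSum_node q w j
  rw [h, eval_zero, eq_comm] at hj
  refine (mul_eq_zero.mp hj).resolve_right (prod_ne_zero_iff.mpr fun k hk => ?_)
  exact sub_ne_zero.mpr (hq.ne (mem_erase.mp hk).1.symm)

theorem rpow_mul_eval_sub_eval_weightedNodalSum (r : ℝ) (v : ι → ℝ) (x : ℝ) :
    x ^ r * (weightedNodalSum q v).eval x - (weightedNodalSum q fun j => v j * q j ^ r).eval x =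
      ∑ j, v j * (x ^ r - q j ^ r) * ∏ k ∈ univ.erase j, (x - q k) := by
  simp only [eval_weightedNodalSum, mul_sum, ← sum_sub_distrib]
  exact sum_congr rfl fun j _ => by ring

theorem rpow_mul_eval_sub_eval_weightedNodalSum_node (r : ℝ) (v : ι → ℝ) (i : ι) :
    q i ^ r * (weightedNodalSum q v).eval (q i) -
      (weightedNodalSum q fun j => v j * q j ^ r).eval (q i) = 0 := by
  rw [rpow_mul_eval_sub_eval_weightedNodalSum]
  refine sum_eq_zero fun j _ => ?_
  obtain rfl | hij := eq_or_ne j i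
  · rw [sub_self, mul_zero, zero_mul]
  · rw [prod_eq_zero (mem_erase.mpr ⟨hij.symm, mem_univ i⟩) (sub_self _), mul_zero]

theorem rpow_mul_eval_sub_eval_weightedNodalSum_of_ne (r : ℝ) (v : ι → ℝ) {x : ℝ}
    (hx : ∀ k, x ≠ q k) :
    x ^ r * (weightedNodalSum q v).eval x - (weightedNodalSum q fun j => v j * q j ^ r).eval x =
      (∏ k, (x - q k)) * ∑ j, (x ^ r - q j ^ r) / (x - q j) * v j := by
  rw [rpow_mul_eval_sub_eval_weightedNodalSum, mul_sum]
  refine sum_congr rfl fun j _ => ?_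
  rw [← mul_prod_erase _ _ (mem_univ j)]
  field_simp [sub_ne_zero.mpr (hx j)]

end WeightedNodalSum

/-- For `0 < p 0 < ⋯ < p (n-1)` and `0 < q 0 < ⋯ < q (n-1)` with `p i ≠ q j` for all
`i, j`, and `r > 0` different from `1, 2, …, n-1`, the matrix with entries
`(p i ^ r - q j ^ r) / (p i - q j)` is nonsingular. -/
theorem loewner_two_tuples_nonsingular {n : ℕ} (p q : Fin n → ℝ)
    (hp : ∀ i, 0 < p i) (hq : ∀ i, 0 < q i)
    (hpmono : StrictMono p) (hqmono : StrictMono q)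
    (hpq : ∀ i j, p i ≠ q j)
    (r : ℝ) (hr : 0 < r) (hri : ∀ k : ℕ, 1 ≤ k → k ≤ n - 1 → r ≠ (k : ℝ)) :
    (Matrix.of fun i j : Fin n => (p i ^ r - q j ^ r) / (p i - q j)).det ≠ 0 := by
  intro hdet
  obtain ⟨v, hv, hMv⟩ := exists_mulVec_eq_zero_iff.mpr hdet
  set s := univ.image p ∪ univ.image q
  have hs_pos : ∀ x ∈ s, 0 < x := by
    simp only [s, mem_union, mem_image, mem_univ, true_and]
    rintro x (⟨i, rfl⟩ | ⟨j, rfl⟩)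
    exacts [hp i, hq j]
  have hs_card : #s = n + n := by
    rw [card_union_of_disjoint (disjoint_left.mpr ?_), card_image_of_injective _ hpmono.injective,
      card_image_of_injective _ hqmono.injective, card_fin]
    simp only [mem_image, mem_univ, true_and]
    rintro _ ⟨i, rfl⟩ ⟨j, hj⟩
    exact hpq i j hj.symm
  have hzero : ∀ x ∈ s, x ^ r * (weightedNodalSum q v).eval x -
      (weightedNodalSum q fun j => v j * q j ^ r).eval x = 0 := by
    simp only [s, mem_union, mem_image, mem_univ, true_and]
    rintro x (⟨i, rfl⟩ | ⟨j, rfl⟩)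
    · rw [rpow_mul_eval_sub_eval_weightedNodalSum_of_ne q r v (hpq i)]
      exact mul_eq_zero_of_right _ (by simpa [mulVec, dotProduct] using congrFun hMv i)
    · exact rpow_mul_eval_sub_eval_weightedNodalSum_node q r v j
  obtain ⟨hP, -⟩ := eq_zero_of_rpow_mul_eval_sub_eval_eq_zero hr hri
    (by simpa using degree_weightedNodalSum_lt q v)
    (by simpa using degree_weightedNodalSum_lt q _) hs_pos hs_card.ge hzero
  exact hv (eq_zero_of_weightedNodalSum_eq_zero hqmono.injective hP)
end

section
/- Let 0 < p_1 < p_2 < ... < p_n with n ≥ 2 and let 2 < r < 3. Then the Loewner matrix L_r is strictly conditionally positive definite: for every nonzero real vector x = (x_1, ..., x_n) with Σ_{i=1}^n x_i = 0, one has ⟨x, L_r x⟩ > 0. Consequently the inertia of L_r is (n-1, 0, 1). -/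
/-!
Put `r = β + 2` with `0 < β < 1` and `κ = ∫₀^∞ u ^ (β - 1) / (1 + u) du`, so that
`κ t ^ β = ∫₀^∞ s ^ (β - 1) t / (s + t) ds`. Then `κ L_r` is the matrix of the integrals
`∫₀^∞ s ^ (β - 1) K(s, p i, p j) ds`, where `K(s, a, b) = a + b - s + s³ / ((s + a) (s + b))` is
the divided difference of `t ↦ t³ / (s + t)`. When `∑ i, x i = 0` the affine part `a + b - s`
drops out of `⟨x, K x⟩`, leaving `κ ⟨x, L_r x⟩ = ∫₀^∞ s ^ (β + 2) (∑ i, x i / (s + p i)) ^ 2 ds`,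
which is positive because the functions `s ↦ 1 / (s + p i)` are linearly independent.

With `a = e^(m - u)` and `b = e^(m + u)`, the `2 × 2` principal minor
`r² (a b)^(r - 1) - ((b^r - a^r) / (b - a))²` is negative because `r sinh u < sinh (r u)`. So
`L_r` has a negative eigenvalue, and positivity on a hyperplane leaves room for only one
nonpositive eigenvalue.
-/

open Matrix

open MeasureTheory Set Real Filter Topology

lemma MeasureTheory.setIntegral_pos_of_continuousOn {X : Type*} [TopologicalSpace X]
    [MeasurableSpace X] [OpensMeasurableSpace X] {μ : Measure X} [μ.IsOpenPosMeasure]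
    {f : X → ℝ} {U : Set X} {x : X} (hU : IsOpen U) (hf : ContinuousOn f U)
    (hfi : IntegrableOn f U μ) (hf0 : ∀ y ∈ U, 0 ≤ f y) (hx : x ∈ U) (hfx : f x ≠ 0) :
    0 < ∫ y in U, f y ∂μ := by
  rw [setIntegral_pos_iff_support_of_nonneg_ae (ae_restrict_of_forall_mem hU.measurableSet hf0) hfi,
    inter_comm]
  exact (hf.isOpen_inter_preimage hU isOpen_compl_singleton).measure_pos μ ⟨x, hx, hfx⟩

noncomputable def kappa (β : ℝ) (k : ℕ) : ℝ := ∫ u in Ioi (0:ℝ), u ^ (β - 1) / (1 + u) ^ k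

section Kappa

variable {β : ℝ} {k : ℕ}

lemma continuousOn_rpow_div_add_pow (β : ℝ) (k : ℕ) {t : ℝ} (ht : 0 ≤ t) :
    ContinuousOn (fun s : ℝ => s ^ (β - 1) / (s + t) ^ k) (Ioi 0) := fun s hs =>
  ((continuousAt_rpow_const s _ (Or.inl (ne_of_gt hs))).div
    ((continuousAt_id.add continuousAt_const).pow k)
    (pow_ne_zero _ (add_pos_of_pos_of_nonneg hs ht).ne')).continuousWithinAt

lemma integrableOn_rpow_div_add_pow (hβ : 0 < β) (hβk : β < k) {t : ℝ} (ht : 0 < t) :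
    IntegrableOn (fun s : ℝ => s ^ (β - 1) / (s + t) ^ k) (Ioi 0) := by
  have hcont := continuousOn_rpow_div_add_pow β k ht.le
  rw [← Ioc_union_Ioi_eq_Ioi zero_le_one]
  refine IntegrableOn.union ?_ ?_
  · have hbound : IntegrableOn (fun s : ℝ => s ^ (β - 1) * (t ^ k)⁻¹) (Ioc 0 1) := by
      refine Integrable.mul_const ?_ _
      exact (intervalIntegrable_iff_integrableOn_Ioc_of_le zero_le_one).mp
        (intervalIntegral.intervalIntegrable_rpow' (by linarith))
    refine hbound.mono' ((hcont.mono Ioc_subset_Ioi_self).aestronglyMeasurable measurableSet_Ioc) ?_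
    filter_upwards [ae_restrict_mem measurableSet_Ioc] with s ⟨hs, _⟩
    rw [norm_of_nonneg (by positivity), div_eq_mul_inv]
    gcongr
    linarith
  · have hbound : IntegrableOn (fun s : ℝ => s ^ (β - 1 - k)) (Ioi 1) :=
      integrableOn_Ioi_rpow_of_lt (by linarith) one_pos
    refine hbound.mono' ((hcont.mono (Ioi_subset_Ioi zero_le_one)).aestronglyMeasurable
      measurableSet_Ioi) ?_
    filter_upwards [ae_restrict_mem measurableSet_Ioi] with s (hs : 1 < s)
    have hs0 : 0 < s := one_pos.trans hs
    rw [norm_of_nonneg (by positivity), rpow_sub hs0 (β - 1) k, rpow_natCast]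
    gcongr
    linarith

lemma integrableOn_rpow_div_one_add_pow (hβ : 0 < β) (hβk : β < k) :
    IntegrableOn (fun s : ℝ => s ^ (β - 1) / (1 + s) ^ k) (Ioi 0) := by
  simpa only [add_comm _ (1:ℝ)] using integrableOn_rpow_div_add_pow hβ hβk one_pos

lemma kappa_pos (hβ : 0 < β) (hβk : β < k) : 0 < kappa β k := by
  refine setIntegral_pos_of_continuousOn isOpen_Ioi ?_ (integrableOn_rpow_div_one_add_pow hβ hβk)
    (fun u hu => ?_) (mem_Ioi.mpr one_pos) (by norm_num)
  · simpa only [add_comm _ (1:ℝ)] using continuousOn_rpow_div_add_pow β k zero_le_one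
  · have : 0 < u := hu
    positivity

lemma integral_rpow_div_add_pow (β : ℝ) (k : ℕ) {t : ℝ} (ht : 0 < t) :
    ∫ s in Ioi (0:ℝ), s ^ (β - 1) / (s + t) ^ k = t ^ (β - k) * kappa β k := by
  have h := integral_comp_mul_left_Ioi (fun s => s ^ (β - 1) / (s + t) ^ k) 0 ht
  have hscale : ∀ u ∈ Ioi (0:ℝ), (t * u) ^ (β - 1) / (t * u + t) ^ k
      = t ^ (β - 1 - k) * (u ^ (β - 1) / (1 + u) ^ k) := fun u hu => by
    rw [mul_rpow ht.le (le_of_lt hu), show t * u + t = t * (1 + u) by ring, mul_pow,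
      rpow_sub ht (β - 1) k, rpow_natCast]
    field_simp
  rw [mul_zero, setIntegral_congr_fun measurableSet_Ioi hscale, integral_const_mul,
    ← kappa, smul_eq_mul, eq_inv_mul_iff_mul_eq₀ ht.ne'] at h
  rw [← h, rpow_sub ht (β - 1) k, rpow_sub ht β k, rpow_sub ht β 1, rpow_one]
  field_simp

lemma kappa_two (hβ : 0 < β) (hβ1 : β < 1) : kappa β 2 = (1 - β) * kappa β 1 := by
  have hint₁ := (integrableOn_rpow_div_one_add_pow (k := 1) hβ (by simpa using hβ1)).const_mul
    (β - 1)
  have hint₂ := integrableOn_rpow_div_one_add_pow (k := 2) hβ (by norm_num; linarith)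
  have hderiv : ∀ u ∈ Ioi (0:ℝ), HasDerivAt (fun u => u ^ β / (1 + u))
      ((β - 1) * (u ^ (β - 1) / (1 + u) ^ 1) + u ^ (β - 1) / (1 + u) ^ 2) u := fun u hu => by
    have hu : 0 < u := hu
    refine ((hasDerivAt_rpow_const (p := β) (Or.inl hu.ne')).div
      ((hasDerivAt_id u).const_add 1) (by positivity)).congr_deriv ?_
    rw [id, show u ^ β = u ^ (β - 1) * u by rw [← rpow_add_one hu.ne']; ring_nf]
    field_simp
    ring
  have hcont : ContinuousWithinAt (fun u : ℝ => u ^ β / (1 + u)) (Ici 0) 0 :=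
    ((continuousAt_rpow_const 0 β (Or.inr hβ.le)).div (by fun_prop)
      (by norm_num)).continuousWithinAt
  have hlim : Tendsto (fun u : ℝ => u ^ β / (1 + u)) atTop (𝓝 0) := by
    refine tendsto_of_tendsto_of_tendsto_of_le_of_le' tendsto_const_nhds
      (tendsto_rpow_neg_atTop (by linarith : 0 < 1 - β)) ?_ ?_
    · filter_upwards [eventually_gt_atTop 0] with u hu
      positivity
    · filter_upwards [eventually_gt_atTop 0] with u hu
      rw [neg_sub, rpow_sub_one hu.ne']
      gcongr
      linarith
  have h := integral_Ioi_of_hasDerivAt_of_tendsto hcont hderiv (hint₁.add hint₂) hlim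
  rw [integral_add hint₁ hint₂, integral_const_mul, zero_rpow hβ.ne', zero_div, sub_zero] at h
  rw [kappa, kappa]
  linarith

end Kappa

noncomputable def loewnerKernel (s a b : ℝ) : ℝ := a + b - s + s ^ 3 / ((s + a) * (s + b))

section LoewnerKernel

variable {β a b s : ℝ}

lemma loewnerKernel_of_ne (hab : a ≠ b) (ha : s + a ≠ 0) (hb : s + b ≠ 0) :
    loewnerKernel s a b = (a ^ 3 / (s + a) - b ^ 3 / (s + b)) / (a - b) := by
  have : a - b ≠ 0 := sub_ne_zero.mpr hab
  rw [loewnerKernel]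
  field_simp
  ring

lemma loewnerKernel_self (ha : s + a ≠ 0) :
    loewnerKernel s a a = 3 * a ^ 2 / (s + a) - a ^ 3 / (s + a) ^ 2 := by
  rw [loewnerKernel]
  field_simp
  ring

lemma sum_sum_mul_loewnerKernel {ι : Type*} [Fintype ι] {x p : ι → ℝ} (hx : ∑ i, x i = 0)
    (s : ℝ) :
    ∑ i, ∑ j, x i * x j * loewnerKernel s (p i) (p j) = s ^ 3 * (∑ i, x i / (s + p i)) ^ 2 := by
  calc ∑ i, ∑ j, x i * x j * loewnerKernel s (p i) (p j)
      = ∑ i, ∑ j, (x i * p i * x j + x i * (x j * p j) - s * x i * x j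
          + s ^ 3 * (x i / (s + p i) * (x j / (s + p j)))) :=
        Finset.sum_congr rfl fun i _ => Finset.sum_congr rfl fun j _ => by
          simp only [loewnerKernel, div_eq_mul_inv, mul_inv]; ring
    _ = (∑ i, x i * p i) * ∑ j, x j + (∑ i, x i) * (∑ j, x j * p j)
          - (∑ i, s * x i) * ∑ j, x j
          + s ^ 3 * ((∑ i, x i / (s + p i)) * ∑ j, x j / (s + p j)) := by
        simp only [Finset.sum_add_distrib, Finset.sum_sub_distrib, ← Finset.mul_sum,
          ← Finset.sum_mul]
    _ = s ^ 3 * (∑ i, x i / (s + p i)) ^ 2 := by rw [hx]; ring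

variable (hβ : 0 < β) (hβ1 : β < 1)
include hβ hβ1

lemma integrableOn_rpow_mul_loewnerKernel (ha : 0 < a) (hb : 0 < b) :
    IntegrableOn (fun s => s ^ (β - 1) * loewnerKernel s a b) (Ioi 0) := by
  have hI (k : ℕ) (hk : 1 ≤ k) {t : ℝ} (ht : 0 < t) :=
    integrableOn_rpow_div_add_pow hβ (lt_of_lt_of_le hβ1 (by exact_mod_cast hk)) ht (k := k)
  rcases eq_or_ne a b with rfl | hab
  · refine IntegrableOn.congr_fun
      (((hI 1 le_rfl ha).const_mul (3 * a ^ 2)).sub ((hI 2 one_le_two ha).const_mul (a ^ 3)))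
      (fun s (hs : 0 < s) => ?_) measurableSet_Ioi
    dsimp only [Pi.sub_apply]
    rw [loewnerKernel_self (by positivity)]
    ring
  · refine IntegrableOn.congr_fun ((((hI 1 le_rfl ha).const_mul (a ^ 3)).sub
      ((hI 1 le_rfl hb).const_mul (b ^ 3))).const_mul (a - b)⁻¹) (fun s (hs : 0 < s) => ?_)
      measurableSet_Ioi
    dsimp only [Pi.sub_apply]
    rw [loewnerKernel_of_ne hab (by positivity) (by positivity)]
    ring

lemma integral_rpow_mul_loewnerKernel_of_ne (ha : 0 < a) (hb : 0 < b) (hab : a ≠ b) :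
    ∫ s in Ioi (0:ℝ), s ^ (β - 1) * loewnerKernel s a b
      = (a ^ (β + 2) - b ^ (β + 2)) / (a - b) * kappa β 1 := by
  have hI (t : ℝ) (ht : 0 < t) :=
    integrableOn_rpow_div_add_pow (k := 1) hβ (by simpa using hβ1) ht
  have hcongr : EqOn (fun s => s ^ (β - 1) * loewnerKernel s a b) (fun s => (a - b)⁻¹ *
      (a ^ 3 * (s ^ (β - 1) / (s + a) ^ 1) - b ^ 3 * (s ^ (β - 1) / (s + b) ^ 1))) (Ioi 0) :=
    fun s (hs : 0 < s) => by
      dsimp only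
      rw [loewnerKernel_of_ne hab (by positivity) (by positivity)]
      ring
  rw [setIntegral_congr_fun measurableSet_Ioi hcongr, integral_const_mul,
    integral_sub ((hI a ha).const_mul _) ((hI b hb).const_mul _), integral_const_mul,
    integral_const_mul, integral_rpow_div_add_pow β 1 ha, integral_rpow_div_add_pow β 1 hb,
    ← rpow_natCast a 3, ← rpow_natCast b 3]
  rw [← mul_assoc, ← rpow_add ha, ← mul_assoc, ← rpow_add hb]
  push_cast
  ring_nf

lemma integral_rpow_mul_loewnerKernel_self (ha : 0 < a) :
    ∫ s in Ioi (0:ℝ), s ^ (β - 1) * loewnerKernel s a a = (β + 2) * a ^ (β + 1) * kappa β 1 := by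
  have hcongr : EqOn (fun s => s ^ (β - 1) * loewnerKernel s a a) (fun s =>
      3 * a ^ 2 * (s ^ (β - 1) / (s + a) ^ 1) - a ^ 3 * (s ^ (β - 1) / (s + a) ^ 2)) (Ioi 0) :=
    fun s (hs : 0 < s) => by
      dsimp only
      rw [loewnerKernel_self (by positivity)]
      ring
  rw [setIntegral_congr_fun measurableSet_Ioi hcongr,
    integral_sub ((integrableOn_rpow_div_add_pow hβ (by simpa using hβ1) ha).const_mul _)
      ((integrableOn_rpow_div_add_pow hβ (by norm_num; linarith) ha).const_mul _),
    integral_const_mul, integral_const_mul, integral_rpow_div_add_pow β 1 ha,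
    integral_rpow_div_add_pow β 2 ha, kappa_two hβ hβ1]
  have h1 : a ^ (β - (1 : ℕ)) = a ^ (β + 1) / a ^ 2 := by
    rw [← rpow_natCast, ← rpow_sub ha]; congr 1; push_cast; ring
  have h2 : a ^ (β - (2 : ℕ)) = a ^ (β + 1) / a ^ 3 := by
    rw [← rpow_natCast, ← rpow_sub ha]; congr 1; push_cast; ring
  rw [h1, h2]
  field_simp
  ring

end LoewnerKernel

open Polynomial in
lemma exists_pos_sum_div_add_ne_zero {ι : Type*} [Fintype ι] [DecidableEq ι] {p x : ι → ℝ}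
    (hp : ∀ i, 0 ≤ p i) (hinj : Function.Injective p) (hx : x ≠ 0) :
    ∃ s, 0 < s ∧ ∑ i, x i / (s + p i) ≠ 0 := by
  by_contra! h
  set P : ℝ[X] := ∑ i, C (x i) * ∏ j ∈ Finset.univ.erase i, (X + C (p j))
  have heval (s : ℝ) : P.eval s = ∑ i, x i * ∏ j ∈ Finset.univ.erase i, (s + p j) := by
    simp [P, eval_finsetSum, eval_prod]
  have hP : P = 0 := eq_zero_of_infinite_isRoot P <| (Ioi_infinite 0).mono fun s (hs : 0 < s) => by
    have hsum : ∑ i, x i * ∏ j ∈ Finset.univ.erase i, (s + p j)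
        = (∑ i, x i / (s + p i)) * ∏ j, (s + p j) := by
      rw [Finset.sum_mul]
      refine Finset.sum_congr rfl fun i _ => ?_
      have : s + p i ≠ 0 := by linarith [hp i]
      rw [← Finset.mul_prod_erase _ _ (Finset.mem_univ i)]
      field_simp
    rw [mem_ofPred_eq, IsRoot, heval, hsum, h s hs, zero_mul]
  refine hx (funext fun k => ?_)
  have hk := heval (-p k)
  rw [hP, eval_zero, Finset.sum_eq_single k (fun i _ hik => ?_) (by simp), eq_comm,
    mul_eq_zero] at hk
  · refine hk.resolve_right (Finset.prod_ne_zero_iff.mpr fun j hj => ?_)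
    rw [neg_add_eq_sub, sub_ne_zero]
    exact hinj.ne (Finset.ne_of_mem_erase hj)
  · refine mul_eq_zero_of_right _ (Finset.prod_eq_zero (i := k) (by simp [Ne.symm hik]) ?_)
    ring

section LoewnerPos

variable {n : ℕ} {p : Fin n → ℝ} {β : ℝ} (hp : ∀ i, 0 < p i) (hinj : Function.Injective p)
include hp hinj

lemma loewner_mul_kappa_eq_integral (hβ : 0 < β) (hβ1 : β < 1) (i j : Fin n) :
    loewner p (β + 2) i j * kappa β 1
      = ∫ s in Ioi (0:ℝ), s ^ (β - 1) * loewnerKernel s (p i) (p j) := by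
  rcases eq_or_ne i j with rfl | hij
  · rw [integral_rpow_mul_loewnerKernel_self hβ hβ1 (hp i), loewner, of_apply, if_pos rfl]
    ring_nf
  · rw [integral_rpow_mul_loewnerKernel_of_ne hβ hβ1 (hp i) (hp j) (hinj.ne hij), loewner,
      of_apply, if_neg hij]

lemma dotProduct_loewner_mulVec_mul_kappa (hβ : 0 < β) (hβ1 : β < 1) (x : Fin n → ℝ) :
    x ⬝ᵥ loewner p (β + 2) *ᵥ x * kappa β 1
      = ∫ s in Ioi (0:ℝ), ∑ i, ∑ j, x i * x j * (s ^ (β - 1) * loewnerKernel s (p i) (p j)) := by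
  have hint (i j : Fin n) := (integrableOn_rpow_mul_loewnerKernel hβ hβ1 (hp i) (hp j)).const_mul
    (x i * x j)
  rw [integral_finsetSum _ fun i _ => integrable_finsetSum _ fun j _ => hint i j]
  simp only [dotProduct, mulVec, Finset.mul_sum, Finset.sum_mul]
  refine Finset.sum_congr rfl fun i _ => ?_
  rw [integral_finsetSum _ fun j _ => hint i j]
  refine Finset.sum_congr rfl fun j _ => ?_
  rw [integral_const_mul, ← loewner_mul_kappa_eq_integral hp hinj hβ hβ1]
  ring

lemma dotProduct_loewner_mulVec_pos {r : ℝ} (hr2 : 2 < r) (hr3 : r < 3) {x : Fin n → ℝ}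
    (hx0 : x ≠ 0) (hx : ∑ i, x i = 0) : 0 < x ⬝ᵥ loewner p r *ᵥ x := by
  obtain ⟨β, hβ, hβ1, rfl⟩ : ∃ β, 0 < β ∧ β < 1 ∧ r = β + 2 :=
    ⟨r - 2, by linarith, by linarith, by ring⟩
  have hF : (fun s => ∑ i, ∑ j, x i * x j * (s ^ (β - 1) * loewnerKernel s (p i) (p j)))
      = fun s => s ^ (β - 1) * (s ^ 3 * (∑ i, x i / (s + p i)) ^ 2) := funext fun s => by
    simp_rw [mul_left_comm _ (s ^ (β - 1)), ← Finset.mul_sum, sum_sum_mul_loewnerKernel hx]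
  have hint : IntegrableOn
      (fun s => ∑ i, ∑ j, x i * x j * (s ^ (β - 1) * loewnerKernel s (p i) (p j))) (Ioi 0) :=
    integrable_finsetSum _ fun i _ => integrable_finsetSum _ fun j _ =>
      (integrableOn_rpow_mul_loewnerKernel hβ hβ1 (hp i) (hp j)).const_mul (x i * x j)
  have hQ := dotProduct_loewner_mulVec_mul_kappa hp hinj hβ hβ1 x
  rw [hF] at hQ hint
  obtain ⟨s₀, hs₀, hT⟩ := exists_pos_sum_div_add_ne_zero (fun i => (hp i).le) hinj hx0
  refine pos_of_mul_pos_left (hQ ▸ setIntegral_pos_of_continuousOn isOpen_Ioi ?_ hint ?_ hs₀ ?_)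
    (kappa_pos hβ (by simpa using hβ1)).le
  · intro s (hs : 0 < s)
    have : ∀ i, s + p i ≠ 0 := fun i => by linarith [hp i]
    refine ContinuousAt.continuousWithinAt ?_
    fun_prop (disch := first | exact this _ | exact Or.inl hs.ne')
  · intro s (hs : 0 < s)
    positivity
  · have : 0 < s₀ ^ (β - 1) := by positivity
    positivity

end LoewnerPos

lemma loewner_isSymm {n : ℕ} (p : Fin n → ℝ) (r : ℝ) : (loewner p r).IsSymm :=
  IsSymm.ext fun i j => by
    rcases eq_or_ne i j with rfl | hij
    · rfl
    · simp only [loewner, of_apply, hij, hij.symm, ↓reduceIte]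
      rw [← neg_sub (p i ^ r), ← neg_sub (p i), neg_div_neg_eq]

lemma Real.mul_sinh_lt_sinh_mul_s17 {r u : ℝ} (hr : 1 < r) (hu : 0 < u) :
    r * sinh u < sinh (r * u) := by
  have hmono : StrictMonoOn (fun t => sinh (r * t) - r * sinh t) (Set.Ici 0) := by
    refine strictMonoOn_of_deriv_pos (convex_Ici 0) (by fun_prop) fun t ht => ?_
    rw [interior_Ici, Set.mem_Ioi] at ht
    have hd : HasDerivAt (fun t => sinh (r * t) - r * sinh t) (cosh (r * t) * r - r * cosh t) t :=
      ((hasDerivAt_sinh _).comp t ((hasDerivAt_id t).const_mul r) |>.congr_deriv (by simp)).sub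
        ((hasDerivAt_sinh t).const_mul r)
    have : cosh t < cosh (r * t) := by
      rw [cosh_lt_cosh, abs_of_pos ht, abs_of_pos (by positivity)]
      nlinarith
    rw [hd.deriv]
    nlinarith
  simpa using hmono Set.self_mem_Ici hu.le hu

lemma mul_rpow_sub_one_mul_lt_sq_div {a b r : ℝ} (ha : 0 < a) (hab : a < b) (hr : 1 < r) :
    r * a ^ (r - 1) * (r * b ^ (r - 1)) < ((b ^ r - a ^ r) / (b - a)) ^ 2 := by
  set m := (log a + log b) / 2
  set u := (log b - log a) / 2
  have hu : 0 < u := half_pos (sub_pos.mpr (log_lt_log ha hab))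
  have ha' : a = exp (m - u) := by rw [show m - u = log a by ring, exp_log ha]
  have hb' : b = exp (m + u) := by rw [show m + u = log b by ring, exp_log (ha.trans hab)]
  have hsinh (c : ℝ) : b ^ c - a ^ c = 2 * exp (c * m) * sinh (c * u) := by
    rw [ha', hb', ← exp_mul, ← exp_mul, sinh_eq, show (m + u) * c = c * m + c * u by ring,
      show (m - u) * c = c * m + -(c * u) by ring, exp_add, exp_add]
    ring
  have hprod : a ^ (r - 1) * b ^ (r - 1) = exp ((r - 1) * m) ^ 2 := by
    rw [ha', hb', ← exp_mul, ← exp_mul, ← exp_add, sq, ← exp_add]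
    ring_nf
  have hdiv : (b ^ r - a ^ r) / (b - a) = exp ((r - 1) * m) * (sinh (r * u) / sinh u) := by
    have := sinh_pos_iff.mpr hu
    rw [hsinh, show b - a = b ^ (1 : ℝ) - a ^ (1 : ℝ) by simp, hsinh, one_mul, one_mul,
      show r * m = (r - 1) * m + m by ring, exp_add]
    field_simp
  have hratio : r < sinh (r * u) / sinh u :=
    (lt_div_iff₀ (sinh_pos_iff.mpr hu)).mpr (mul_sinh_lt_sinh_mul_s17 hr hu)
  calc r * a ^ (r - 1) * (r * b ^ (r - 1)) = (exp ((r - 1) * m) * r) ^ 2 := by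
        rw [mul_pow, ← hprod]; ring
    _ < _ := by rw [hdiv]; gcongr

lemma Matrix.IsSymm.exists_dotProduct_mulVec_neg {ι : Type*} [Fintype ι] [DecidableEq ι]
    {A : Matrix ι ι ℝ} (hA : A.IsSymm) {i j : ι} (hi : 0 < A i i)
    (hdet : A i i * A j j < A i j ^ 2) : ∃ y, y ⬝ᵥ A *ᵥ y < 0 := by
  refine ⟨A i j • Pi.single i 1 - A i i • Pi.single j 1, ?_⟩
  simp only [mulVec_sub, mulVec_smul, mulVec_single_one, sub_dotProduct, dotProduct_sub,
    smul_dotProduct, dotProduct_smul, single_one_dotProduct, col_apply, smul_eq_mul, hA.apply i j]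
  nlinarith [mul_pos hi (sub_pos.mpr hdet)]

lemma loewner_exists_dotProduct_mulVec_neg {n : ℕ} (hn : 2 ≤ n) {p : Fin n → ℝ}
    (hp : ∀ i, 0 < p i) (hmono : StrictMono p) {r : ℝ} (hr : 1 < r) :
    ∃ y, y ⬝ᵥ loewner p r *ᵥ y < 0 := by
  have h01 : (⟨0, by omega⟩ : Fin n) < ⟨1, by omega⟩ := Fin.mk_lt_mk.mpr zero_lt_one
  refine (loewner_isSymm p r).exists_dotProduct_mulVec_neg (i := ⟨0, by omega⟩)
    (j := ⟨1, by omega⟩) ?_ ?_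
  · simpa [loewner] using mul_pos (by linarith) (rpow_pos_of_pos (hp _) (r - 1))
  simp only [loewner, of_apply, h01.ne, ↓reduceIte]
  rw [← neg_sub (p _ ^ r), ← neg_sub (p _), neg_div_neg_eq]
  exact mul_rpow_sub_one_mul_lt_sq_div (hp _) (hmono h01) hr

lemma Matrix.dotProduct_mulVec_smul_add_smul {ι : Type*} [Fintype ι] {A : Matrix ι ι ℝ}
    {u v : ι → ℝ} {a b : ℝ} (hu : A *ᵥ u = a • u) (hv : A *ᵥ v = b • v) (huu : u ⬝ᵥ u = 1)
    (hvv : v ⬝ᵥ v = 1) (huv : u ⬝ᵥ v = 0) (c d : ℝ) :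
    (c • u + d • v) ⬝ᵥ A *ᵥ (c • u + d • v) = c ^ 2 * a + d ^ 2 * b := by
  simp only [mulVec_add, mulVec_smul, hu, hv, add_dotProduct, dotProduct_add, smul_dotProduct,
    dotProduct_smul, huu, hvv, huv, dotProduct_comm v u, smul_eq_mul]
  ring

namespace Matrix.IsHermitian

variable {ι : Type*} [Fintype ι] [DecidableEq ι] {A : Matrix ι ι ℝ} (hA : A.IsHermitian)
include hA

lemma dotProduct_eigenvectorBasis (i j : ι) :
    (hA.eigenvectorBasis i : ι → ℝ) ⬝ᵥ hA.eigenvectorBasis j = if i = j then 1 else 0 := by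
  simpa [PiLp.inner_apply, dotProduct, mul_comm] using
    orthonormal_iff_ite.mp hA.eigenvectorBasis.orthonormal i j

lemma eq_of_eigenvalues_nonpos {w : ι → ℝ}
    (hpos : ∀ x, x ≠ 0 → w ⬝ᵥ x = 0 → 0 < x ⬝ᵥ A *ᵥ x) {i j : ι}
    (hi : hA.eigenvalues i ≤ 0) (hj : hA.eigenvalues j ≤ 0) : i = j := by
  by_contra hij
  set u : ι → ℝ := ⇑(hA.eigenvectorBasis i)
  set v : ι → ℝ := ⇑(hA.eigenvectorBasis j)
  have huu : u ⬝ᵥ u = 1 := by simpa using hA.dotProduct_eigenvectorBasis i i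
  have hvv : v ⬝ᵥ v = 1 := by simpa using hA.dotProduct_eigenvectorBasis j j
  have huv : u ⬝ᵥ v = 0 := by simpa [hij] using hA.dotProduct_eigenvectorBasis i j
  obtain ⟨c, d, hcd, hw⟩ : ∃ c d : ℝ, (c ≠ 0 ∨ d ≠ 0) ∧ w ⬝ᵥ (c • u + d • v) = 0 := by
    by_cases h : w ⬝ᵥ u = 0
    · exact ⟨1, 0, by simp, by simp [h]⟩
    · refine ⟨w ⬝ᵥ v, -(w ⬝ᵥ u), Or.inr (neg_ne_zero.mpr h), ?_⟩
      simp only [dotProduct_add, dotProduct_smul, smul_eq_mul]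
      ring
  have hx : c • u + d • v ≠ 0 := fun h0 => by
    have hc : c = 0 := by simpa [huu, dotProduct_comm v u, huv] using congrArg (· ⬝ᵥ u) h0
    have hd : d = 0 := by simpa [hvv, huv] using congrArg (· ⬝ᵥ v) h0
    exact hcd.elim (· hc) (· hd)
  have hform := hpos _ hx hw
  rw [dotProduct_mulVec_smul_add_smul (hA.mulVec_eigenvectorBasis i)
    (hA.mulVec_eigenvectorBasis j) huu hvv huv] at hform
  nlinarith [mul_nonpos_of_nonneg_of_nonpos (sq_nonneg c) hi,
    mul_nonpos_of_nonneg_of_nonpos (sq_nonneg d) hj]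

lemma exists_eigenvalues_neg {y : ι → ℝ} (hy : y ⬝ᵥ A *ᵥ y < 0) : ∃ i, hA.eigenvalues i < 0 := by
  by_contra! h
  have := (hA.posSemidef_iff_eigenvalues_nonneg.mpr h).dotProduct_mulVec_nonneg y
  rw [star_trivial] at this
  linarith

lemma inertia_of_pos_on_hyperplane {w : ι → ℝ}
    (hpos : ∀ x, x ≠ 0 → w ⬝ᵥ x = 0 → 0 < x ⬝ᵥ A *ᵥ x) {y : ι → ℝ} (hy : y ⬝ᵥ A *ᵥ y < 0) :
    Fintype.card {i // 0 < hA.eigenvalues i} = Fintype.card ι - 1 ∧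
    Fintype.card {i // hA.eigenvalues i = 0} = 0 ∧
    Fintype.card {i // hA.eigenvalues i < 0} = 1 := by
  obtain ⟨i₀, hi₀⟩ := hA.exists_eigenvalues_neg hy
  have huniq (i : ι) (hi : hA.eigenvalues i ≤ 0) : i = i₀ :=
    hA.eq_of_eigenvalues_nonpos hpos hi hi₀.le
  have hnonpos : Fintype.card {i // ¬ 0 < hA.eigenvalues i} = 1 :=
    Fintype.card_eq_one_iff.mpr
      ⟨⟨i₀, lt_asymm hi₀⟩, fun ⟨i, hi⟩ => Subtype.ext (huniq i (not_lt.mp hi))⟩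
  refine ⟨?_, Fintype.card_eq_zero_iff.mpr ⟨fun ⟨i, hi⟩ => ?_⟩,
    Fintype.card_eq_one_iff.mpr ⟨⟨i₀, hi₀⟩, fun ⟨i, hi⟩ => Subtype.ext (huniq i hi.le)⟩⟩
  · have := Fintype.card_subtype_compl fun i => 0 < hA.eigenvalues i
    have := Fintype.card_subtype_le fun i => 0 < hA.eigenvalues i
    omega
  · exact hi₀.ne (huniq i hi.le ▸ hi)

end Matrix.IsHermitian

/-- For `2 < r < 3` (and `n ≥ 2`), the Loewner matrix `L_r` is strictly conditionally
positive definite: `⟨x, L_r x⟩ > 0` for every nonzero `x` with `∑ i, x i = 0`.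
Consequently the inertia of `L_r` is `(n - 1, 0, 1)`. -/
theorem loewner_conditionally_positive {n : ℕ} (hn : 2 ≤ n) (p : Fin n → ℝ)
    (hp : ∀ i, 0 < p i) (hmono : StrictMono p)
    (r : ℝ) (hr1 : 2 < r) (hr2 : r < 3)
    (hA : (loewner p r).IsHermitian) :
    (∀ x : Fin n → ℝ, x ≠ 0 → (∑ i, x i) = 0 →
      0 < x ⬝ᵥ (loewner p r).mulVec x) ∧
    Fintype.card {i // 0 < hA.eigenvalues i} = n - 1 ∧
    Fintype.card {i // hA.eigenvalues i = 0} = 0 ∧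
    Fintype.card {i // hA.eigenvalues i < 0} = 1 := by
  have hpos (x : Fin n → ℝ) (hx0 : x ≠ 0) (hx : ∑ i, x i = 0) : 0 < x ⬝ᵥ loewner p r *ᵥ x :=
    dotProduct_loewner_mulVec_pos hp hmono.injective hr1 hr2 hx0 hx
  obtain ⟨y, hy⟩ := loewner_exists_dotProduct_mulVec_neg hn hp hmono (by linarith)
  have hinertia := hA.inertia_of_pos_on_hyperplane (w := 1)
    (fun x hx0 hx => hpos x hx0 (by rwa [one_dotProduct] at hx)) hy
  rw [Fintype.card_fin] at hinertia
  exact ⟨hpos, hinertia⟩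
end

section
/- Let 0 < p_1 < p_2 < ... < p_n, let D = diag(p_1, ..., p_n), let D^{r-1} = diag(p_1^{r-1}, ..., p_n^{r-1}), and let E be the n × n matrix with all entries equal to 1. Then for every real number r, the Loewner matrices satisfy the identity L_r = D^{r-1} E + D L_{r-2} D + E D^{r-1}. -/
open Matrix

/-- With `D = diag (p 0, …)`, `D^{r-1} = diag (p 0 ^ (r-1), …)` and `E` the all-ones
matrix, for every real `r` one has `L_r = D^{r-1} E + D L_{r-2} D + E D^{r-1}`. -/
theorem loewner_recursion {n : ℕ} (p : Fin n → ℝ)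
    (hp : ∀ i, 0 < p i) (hmono : StrictMono p) (r : ℝ) :
    loewner p r =
      Matrix.diagonal (fun i => p i ^ (r - 1)) * (Matrix.of fun _ _ : Fin n => (1 : ℝ)) +
      Matrix.diagonal p * loewner p (r - 2) * Matrix.diagonal p +
      (Matrix.of fun _ _ : Fin n => (1 : ℝ)) * Matrix.diagonal (fun i => p i ^ (r - 1)) := by
  have h1 : ∀ k, p k ^ (r - 1) * p k = p k ^ r := fun k => by
    rw [← Real.rpow_add_one (hp k).ne']; ring_nf
  have h2 : ∀ k, p k ^ (r - 2) * p k = p k ^ (r - 1) := fun k => by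
    rw [← Real.rpow_add_one (hp k).ne']; ring_nf
  ext i j
  simp only [Matrix.add_apply, Matrix.mul_diagonal, Matrix.diagonal_mul,
    Matrix.of_apply, loewner, one_mul, mul_one]
  have h3 : ∀ k, p k ^ (r - 2 - 1) * p k = p k ^ (r - 2) := fun k => by
    rw [← Real.rpow_add_one (hp k).ne']; ring_nf
  by_cases hij : i = j
  · subst hij
    simp only [if_pos rfl, if_true]
    linear_combination (2 - r) * h2 i + (2 - r) * p i * h3 i
  · simp only [if_neg hij]
    have hne : p i - p j ≠ 0 := sub_ne_zero.mpr (fun h => hij (hmono.injective h))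
    field_simp
    linear_combination (-1 : ℝ) * h1 i + h1 j - p j * h2 i + p i * h2 j
end
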